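/- arXiv:1208.3955 — 8 statements merged into one kernel-verified Lean document; each statement's English description precedes it below -/
import Mathlib

section
/- Let P ⊂ ℝ^4 be the convex hull of the ten points (0,0,0,0), (1,0,0,0), (0,1,0,0), (0,0,1,0), (1,1,1,2), (0,0,0,1), (1,0,0,1), (0,1,0,1), (0,0,1,1), (1,1,1,3), let A = {(α,1) : α ∈ P ∩ ℤ^4} ⊂ ℤ^5, and for each positive integer m let x_m = (m,1,1,1,m+1). Then each x_m lies in the cone ℝ_{≥0}A intersected with ℤ^5, but no x_m lies in the additive monoid ℤ_{≥0}A generated by A. In particular, the set (ℝ_{≥0}A ∩ ℤA) \ ℤ_{≥0}A is infinite, so P is not very ample. -/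
open Finset

noncomputable section

/-- Cast an integer lattice point to a real point. -/
def castPt {d : ℕ} (a : Fin d → ℤ) : Fin d → ℝ := fun i => (a i : ℝ)

/-- The cone of nonnegative real combinations of a set of vectors. -/
def coneOf {d : ℕ} (A : Set (Fin d → ℝ)) : Set (Fin d → ℝ) :=
  {x | ∃ (n : ℕ) (c : Fin n → ℝ) (v : Fin n → (Fin d → ℝ)),
    (∀ i, 0 ≤ c i) ∧ (∀ i, v i ∈ A) ∧ x = ∑ i, c i • v i}

/-- `A_P = {(α,1) : α ∈ P ∩ ℤ^d} ⊂ ℤ^(d+1)`. -/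
def APts {d : ℕ} (P : Set (Fin d → ℝ)) : Set (Fin (d+1) → ℤ) :=
  {b | b (Fin.last d) = 1 ∧ castPt (fun i : Fin d => b i.castSucc) ∈ P}

/-- The polytope `P_2 ⊂ ℝ^4` from Ogata's proposed example. -/
def Pogata : Set (Fin 4 → ℝ) := convexHull ℝ
  ({![0,0,0,0], ![1,0,0,0], ![0,1,0,0], ![0,0,1,0], ![1,1,1,2],
    ![0,0,0,1], ![1,0,0,1], ![0,1,0,1], ![0,0,1,1], ![1,1,1,3]} : Set (Fin 4 → ℝ))

/-! The `x_m` lie in the cone because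
`x_m = (m - 1/2)(1,0,0,0,1) + 1/2 ((0,1,0,0,1) + (0,0,1,0,1) + (1,1,1,2,1))`,
and in the lattice because `x_m = (m - 1)(1,0,0,0,1) + (1,1,1,2,1) - (0,0,0,1,1) + 2(0,0,0,0,1)`.
Every lattice point `y` of `P` has `y₃ ≥ 0`, and if moreover `y₃ ≤ 1` then `y₀ + y₁ + y₂ ≤ 1`:
the facets `y₀ + y₁ + y₂ ≤ y₃ + 1` and `y₀ + y₁ - y₂ ≤ 1` (and its permutations) leave no integer
point with `y₀ + y₁ + y₂ = 2`. So in a sum of points of `A` whose fourth coordinate is `≤ 1`, the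
first three coordinates add up to at most the last one (the number of summands), which fails for
`x_m` as `m + 2 > m + 1`. -/

def pogataVertices : Set (Fin 4 → ℝ) :=
  {![0,0,0,0], ![1,0,0,0], ![0,1,0,0], ![0,0,1,0], ![1,1,1,2],
    ![0,0,0,1], ![1,0,0,1], ![0,1,0,1], ![0,0,1,1], ![1,1,1,3]}

theorem dotProduct_le_of_mem_convexHull {ι : Type*} [Fintype ι] {s : Set (ι → ℝ)}
    {a : ι → ℝ} {c : ℝ} (h : ∀ p ∈ s, a ⬝ᵥ p ≤ c) {x : ι → ℝ} (hx : x ∈ convexHull ℝ s) :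
    a ⬝ᵥ x ≤ c :=
  convexHull_min h (convex_halfSpace_le ⟨dotProduct_add a, fun t p => dotProduct_smul t a p⟩ c) hx

theorem castPt_init_vecCons (a b c d e : ℤ) :
    castPt (fun i : Fin 4 => (![a, b, c, d, e] : Fin 5 → ℤ) i.castSucc) = ![(a : ℝ), b, c, d] := by
  ext i; fin_cases i <;> rfl

theorem vecCons_mem_APts_Pogata {a b c d : ℤ} (h : ![(a : ℝ), b, c, d] ∈ pogataVertices) :
    ![a, b, c, d, 1] ∈ APts Pogata :=
  ⟨rfl, by rw [castPt_init_vecCons]; exact subset_convexHull ℝ _ h⟩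

theorem APts_Pogata_facets {y : Fin 5 → ℤ} (hy : y ∈ APts Pogata) :
    y 4 = 1 ∧ 0 ≤ y 3 ∧ y 0 + y 1 + y 2 ≤ y 3 + 1 ∧
      y 0 + y 1 ≤ y 2 + 1 ∧ y 0 + y 2 ≤ y 1 + 1 ∧ y 1 + y 2 ≤ y 0 + 1 := by
  obtain ⟨hlast, hP⟩ := hy
  have facet (a₀ a₁ a₂ a₃ c : ℤ) (h : ∀ p ∈ pogataVertices, ![(a₀ : ℝ), a₁, a₂, a₃] ⬝ᵥ p ≤ c) :
      a₀ * y 0 + a₁ * y 1 + a₂ * y 2 + a₃ * y 3 ≤ c := by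
    rw [← Int.cast_le (R := ℝ)]
    push_cast
    simpa [dotProduct, Fin.sum_univ_four, castPt] using dotProduct_le_of_mem_convexHull h hP
  have h3 := facet 0 0 0 (-1) 0 (by norm_num [pogataVertices])
  have hsum := facet 1 1 1 (-1) 1 (by norm_num [pogataVertices])
  have h01 := facet 1 1 (-1) 0 1 (by norm_num [pogataVertices])
  have h02 := facet 1 (-1) 1 0 1 (by norm_num [pogataVertices])
  have h12 := facet (-1) 1 1 0 1 (by norm_num [pogataVertices])
  refine ⟨hlast, ?_, ?_, ?_, ?_, ?_⟩ <;> linarith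

theorem APts_Pogata_sum_le_one {y : Fin 5 → ℤ} (hy : y ∈ APts Pogata) (h3 : y 3 ≤ 1) :
    y 0 + y 1 + y 2 ≤ 1 := by
  obtain ⟨-, -, hsum, h01, h02, h12⟩ := APts_Pogata_facets hy
  omega

theorem nonneg_and_sum_le_of_mem_closure_APts_Pogata {y : Fin 5 → ℤ}
    (hy : y ∈ AddSubmonoid.closure (APts Pogata)) :
    0 ≤ y 3 ∧ (y 3 ≤ 1 → y 0 + y 1 + y 2 ≤ y 4) := by
  induction hy using AddSubmonoid.closure_induction with
  | mem y hy =>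
    obtain ⟨hlast, h3, -⟩ := APts_Pogata_facets hy
    exact ⟨h3, fun h => hlast ▸ APts_Pogata_sum_le_one hy h⟩
  | zero => simp
  | add a b _ _ ha hb =>
    simp only [Pi.add_apply]
    refine ⟨by omega, fun h => ?_⟩
    have := ha.2 (by omega)
    have := hb.2 (by omega)
    omega

theorem vecCons_notMem_closure_APts_Pogata (m : ℤ) :
    (![m, 1, 1, 1, m + 1] : Fin 5 → ℤ) ∉ AddSubmonoid.closure (APts Pogata) := fun h => by
  have := (nonneg_and_sum_le_of_mem_closure_APts_Pogata h).2 le_rfl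
  simp at this

theorem vecCons_mem_coneOf_APts_Pogata {m : ℤ} (hm : 1 ≤ m) :
    castPt ![m, 1, 1, 1, m + 1] ∈ coneOf (castPt '' APts Pogata) := by
  have hm' : (1 : ℝ) ≤ m := by exact_mod_cast hm
  refine ⟨4, ![m - 1 / 2, 1 / 2, 1 / 2, 1 / 2],
    ![castPt ![1, 0, 0, 0, 1], castPt ![0, 1, 0, 0, 1], castPt ![0, 0, 1, 0, 1],
      castPt ![1, 1, 1, 2, 1]], ?_, ?_, ?_⟩
  · intro i; fin_cases i <;> norm_num; linarith
  · intro i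
    fin_cases i <;>
      exact Set.mem_image_of_mem _ (vecCons_mem_APts_Pogata (by simp [pogataVertices]))
  · ext j; fin_cases j <;> simp [castPt, Fin.sum_univ_four] <;> ring

theorem vecCons_mem_addSubgroup_closure_APts_Pogata (m : ℤ) :
    (![m, 1, 1, 1, m + 1] : Fin 5 → ℤ) ∈ AddSubgroup.closure (APts Pogata) := by
  have mem {a b c d : ℤ} (h : ![(a : ℝ), b, c, d] ∈ pogataVertices) :
      ![a, b, c, d, 1] ∈ AddSubgroup.closure (APts Pogata) :=
    AddSubgroup.subset_closure (vecCons_mem_APts_Pogata h)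
  have decomp : (![m, 1, 1, 1, m + 1] : Fin 5 → ℤ) =
      (m - 1) • ![1, 0, 0, 0, 1] + ![1, 1, 1, 2, 1] - ![0, 0, 0, 1, 1] +
        (2 : ℤ) • ![0, 0, 0, 0, 1] := by
    ext i; fin_cases i <;> simp; ring
  rw [decomp]
  refine add_mem (sub_mem (add_mem (zsmul_mem ?_ _) ?_) ?_) (zsmul_mem ?_ _) <;>
    exact mem (by simp [pogataVertices])

theorem stmt_1 :
    (∀ m : ℤ, 1 ≤ m →
      castPt (![m, 1, 1, 1, m + 1]) ∈ coneOf (castPt '' APts Pogata) ∧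
      (![m, 1, 1, 1, m + 1] : Fin 5 → ℤ) ∉ AddSubmonoid.closure (APts Pogata)) ∧
    {b : Fin 5 → ℤ | castPt b ∈ coneOf (castPt '' APts Pogata) ∧
      b ∈ AddSubgroup.closure (APts Pogata) ∧
      b ∉ AddSubmonoid.closure (APts Pogata)}.Infinite := by
  refine ⟨fun m hm =>
    ⟨vecCons_mem_coneOf_APts_Pogata hm, vecCons_notMem_closure_APts_Pogata m⟩, ?_⟩
  have hinj : Function.Injective fun m : ℤ => (![m, 1, 1, 1, m + 1] : Fin 5 → ℤ) :=
    fun m n h => congrFun h 0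
  refine ((Set.Ici_infinite 1).image hinj.injOn).mono ?_
  rintro _ ⟨m, hm, rfl⟩
  exact ⟨vecCons_mem_coneOf_APts_Pogata hm, vecCons_mem_addSubgroup_closure_APts_Pogata m,
    vecCons_notMem_closure_APts_Pogata m⟩
end
end

section
/- Let Q_k ⊂ ℝ^3 be the convex hull of {(0,0,0), (1,0,0), (0,1,0), (0,0,1), (1,0,1), (0,1,1), (1,1,k), (1,1,k+1)} for an integer k ≥ 4. Then the point (1,1,3,2) ∈ ℤ^4 lies in ℝ_{≥0}A_{Q_k} ∩ ℤ^4 but not in ℤ_{≥0}A_{Q_k}; i.e., (1,1,3,2) is a hole of Q_k. -/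
open Finset

noncomputable section

/-- The polytope `Q_k ⊂ ℝ^3`. -/
def Qk (k : ℤ) : Set (Fin 3 → ℝ) := convexHull ℝ
  ({![0,0,0], ![1,0,0], ![0,1,0], ![0,0,1], ![1,0,1], ![0,1,1],
    ![1,1,(k : ℝ)], ![1,1,(k : ℝ)+1]} : Set (Fin 3 → ℝ))

lemma qk_ineq (k : ℤ) (hk : 4 ≤ k) {x : Fin 3 → ℝ} (hx : x ∈ Qk k) :
    0 ≤ x 0 ∧ x 0 ≤ 1 ∧ 0 ≤ x 1 ∧ x 1 ≤ 1 ∧ 0 ≤ x 2 ∧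
    x 2 ≤ 1 + k * x 1 ∧ x 2 ≤ 1 + k * x 0 ∧ k * (x 0 + x 1 - 1) ≤ x 2 := by
  have hk' : (4:ℝ) ≤ (k:ℝ) := by exact_mod_cast hk
  have hsub : Qk k ⊆ {y : Fin 3 → ℝ | 0 ≤ y 0 ∧ y 0 ≤ 1 ∧ 0 ≤ y 1 ∧ y 1 ≤ 1 ∧ 0 ≤ y 2 ∧
      y 2 ≤ 1 + k * y 1 ∧ y 2 ≤ 1 + k * y 0 ∧ k * (y 0 + y 1 - 1) ≤ y 2} := by
    apply convexHull_min
    · intro y hy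
      simp only [Set.mem_insert_iff, Set.mem_singleton_iff] at hy
      rcases hy with h|h|h|h|h|h|h|h <;> subst h <;>
        simp only [Set.mem_setOf_eq, Matrix.cons_val_zero, Matrix.cons_val_one,
          Matrix.head_cons, Matrix.cons_val_two, Matrix.tail_cons] <;>
        norm_num <;> (try constructorm* _ ∧ _) <;> nlinarith [hk]
    · intro y hy z hz a b ha hb hab
      simp only [Set.mem_setOf_eq, Pi.add_apply, Pi.smul_apply, smul_eq_mul] at *
      obtain ⟨y1,y2,y3,y4,y5,y6,y7,y8⟩ := hy
      obtain ⟨z1,z2,z3,z4,z5,z6,z7,z8⟩ := hz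
      refine ⟨by positivity, by nlinarith, by positivity, by nlinarith, by positivity,
        by nlinarith, by nlinarith, by nlinarith⟩
  exact hsub hx

lemma apts_int_ineq (k : ℤ) (hk : 4 ≤ k) {a : Fin 4 → ℤ} (ha : a ∈ APts (Qk k)) :
    a 3 = 1 ∧ 0 ≤ a 0 ∧ a 0 ≤ 1 ∧ 0 ≤ a 1 ∧ a 1 ≤ 1 ∧ 0 ≤ a 2 ∧
    a 2 ≤ 1 + k * a 1 ∧ a 2 ≤ 1 + k * a 0 ∧ k * (a 0 + a 1 - 1) ≤ a 2 := by
  obtain ⟨h1, h2⟩ := ha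
  have h3 : a 3 = 1 := h1
  obtain ⟨i1, i2, i3, i4, i5, i6, i7, i8⟩ := qk_ineq k hk h2
  simp only [castPt] at i1 i2 i3 i4 i5 i6 i7 i8
  have e0 : (Fin.castSucc (0:Fin 3)) = (0:Fin 4) := rfl
  have e1 : (Fin.castSucc (1:Fin 3)) = (1:Fin 4) := rfl
  have e2 : (Fin.castSucc (2:Fin 3)) = (2:Fin 4) := rfl
  rw [e0] at i1 i2 i7 i8
  rw [e1] at i3 i4 i6 i8
  rw [e2] at i5 i6 i7 i8
  exact ⟨h3, by exact_mod_cast i1, by exact_mod_cast i2, by exact_mod_cast i3,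
    by exact_mod_cast i4, by exact_mod_cast i5, by exact_mod_cast i6,
    by exact_mod_cast i7, by exact_mod_cast i8⟩

lemma list_sum_apply' (l : List (Fin 4 → ℤ)) (j : Fin 4) :
    l.sum j = (l.map (fun g => g j)).sum := by
  induction l with
  | nil => rfl
  | cons a t ih => simp [ih]

theorem stmt_2 (k : ℤ) (hk : 4 ≤ k) :
    castPt (![1, 1, 3, 2]) ∈ coneOf (castPt '' APts (Qk k)) ∧
    (![1, 1, 3, 2] : Fin 4 → ℤ) ∉ AddSubmonoid.closure (APts (Qk k)) := by
  have hk' : (4:ℝ) ≤ (k:ℝ) := by exact_mod_cast hk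
  have hkne : (k:ℝ) - 1 ≠ 0 := by linarith
  constructor
  · refine ⟨4, ![((k:ℝ)-2)/((k:ℝ)-1), ((k:ℝ)-2)/((k:ℝ)-1), 1/((k:ℝ)-1), 1/((k:ℝ)-1)],
      ![castPt ![1,0,1,1], castPt ![0,1,1,1], castPt ![1,1,k,1], castPt ![0,0,1,1]],
      ?_, ?_, ?_⟩
    · intro i
      fin_cases i <;> simp <;>
        first
          | linarith
          | (apply div_nonneg <;> linarith)
    · have mem : ∀ (b : Fin 4 → ℤ), b 3 = 1 →
          castPt (fun i : Fin 3 => b i.castSucc) ∈ Qk k → castPt b ∈ castPt '' APts (Qk k) :=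
        fun b h1 h2 => ⟨b, ⟨h1, h2⟩, rfl⟩
      intro i
      fin_cases i
      · refine mem ![1,0,1,1] rfl ?_
        have : (castPt (fun i : Fin 3 => (![1,0,1,1] : Fin 4 → ℤ) i.castSucc))
            = ![(1:ℝ),0,1] := by
          funext j; fin_cases j <;> simp [castPt, Fin.castSucc, Fin.castAdd, Fin.castLE]
        rw [this]
        exact subset_convexHull ℝ _ (by simp)
      · refine mem ![0,1,1,1] rfl ?_
        have : (castPt (fun i : Fin 3 => (![0,1,1,1] : Fin 4 → ℤ) i.castSucc))
            = ![(0:ℝ),1,1] := by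
          funext j; fin_cases j <;> simp [castPt, Fin.castSucc, Fin.castAdd, Fin.castLE]
        rw [this]
        exact subset_convexHull ℝ _ (by simp)
      · refine mem ![1,1,k,1] rfl ?_
        have : (castPt (fun i : Fin 3 => (![1,1,k,1] : Fin 4 → ℤ) i.castSucc))
            = ![(1:ℝ),1,(k:ℝ)] := by
          funext j; fin_cases j <;> simp [castPt, Fin.castSucc, Fin.castAdd, Fin.castLE]
        rw [this]
        exact subset_convexHull ℝ _ (by simp)
      · refine mem ![0,0,1,1] rfl ?_
        have : (castPt (fun i : Fin 3 => (![0,0,1,1] : Fin 4 → ℤ) i.castSucc))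
            = ![(0:ℝ),0,1] := by
          funext j; fin_cases j <;> simp [castPt, Fin.castSucc, Fin.castAdd, Fin.castLE]
        rw [this]
        exact subset_convexHull ℝ _ (by simp)
    · funext j
      rw [Fin.sum_univ_four]
      fin_cases j <;> simp [castPt] <;> field_simp <;> ring
  · intro h
    obtain ⟨l, hl, hsum⟩ := AddSubmonoid.exists_list_of_mem_closure h
    have hlast : ∀ g ∈ l, g 3 = 1 := fun g hg => (apts_int_ineq k hk (hl g hg)).1
    have hlen : l.length = 2 := by
      have h2 : (l.map (fun g => g 3)).sum = 2 := by
        have := list_sum_apply' l 3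
        rw [hsum] at this
        simpa using this.symm
      have hrep : (l.map (fun g => g 3)) = List.replicate (l.map (fun g => g 3)).length 1 := by
        apply List.eq_replicate_of_mem
        intro x hx
        obtain ⟨g, hg, rfl⟩ := List.mem_map.mp hx
        exact hlast g hg
      rw [List.length_map] at hrep
      rw [hrep, List.sum_replicate] at h2
      simp only [smul_eq_mul, mul_one, nsmul_eq_mul] at h2
      exact_mod_cast h2
    match l, hlen with
    | [a, b], _ =>
      have hab : a + b = ![1,1,3,2] := by simpa using hsum
      have ha := apts_int_ineq k hk (hl a (by simp))
      have hb := apts_int_ineq k hk (hl b (by simp))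
      obtain ⟨_, a1, a2, a3, a4, a5, a6, a7, a8⟩ := ha
      obtain ⟨_, b1, b2, b3, b4, b5, b6, b7, b8⟩ := hb
      have s0 : a 0 + b 0 = 1 := by have := congrFun hab 0; simpa using this
      have s1 : a 1 + b 1 = 1 := by have := congrFun hab 1; simpa using this
      have s2 : a 2 + b 2 = 3 := by have := congrFun hab 2; simpa using this
      have hb0 : b 0 = 1 - a 0 := by omega
      have hb1 : b 1 = 1 - a 1 := by omega
      have ca0 : a 0 = 0 ∨ a 0 = 1 := by omega
      have ca1 : a 1 = 0 ∨ a 1 = 1 := by omega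
      rcases ca0 with h0|h0 <;> rcases ca1 with h1|h1 <;>
        simp only [h0, h1, hb0, hb1] at a6 a7 a8 b6 b7 b8 <;>
        (try norm_num at a6 a7 a8 b6 b7 b8) <;>
        omega
end
end

section
/- Let h ≥ 1, d ≥ 3 be integers and let P_{h,d} ⊂ ℝ^d be the convex hull of the points u_1 = 0, u_2 = e_d, u_3 = e_2+⋯+e_{d-1}, u_4 = h(e_2+⋯+e_{d-1}+e_d), u_5 = (h-1)(e_2+⋯+e_{d-1})+h e_d, u_6 = h(e_2+⋯+e_{d-1})+(h-1)e_d, u_7 = e_1+4e_d, u_8 = e_1+5e_d, u_9 = e_1+e_2+⋯+e_{d-1}, u_10 = e_1+e_2+⋯+e_{d-1}+e_d, together with v_i = e_i and v_i' = e_i+e_d for i = 2,…,d-1. Then the lattice points of P_{h,d} generate ℤ^d as a group (so P_{h,d} has dimension d and ℤA_{P_{h,d}} = ℤ^{d+1}). -/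
open Finset

noncomputable section

/-- The `k`-th standard unit vector (0-indexed coordinate `k`). -/
def eV (d : ℕ) (k : ℕ) : Fin d → ℤ := fun i => if i.val = k then 1 else 0

/-- `e_2 + ⋯ + e_{d-1}` (coordinates with 0 < index < d-1). -/
def eMid (d : ℕ) : Fin d → ℤ := fun i => if 0 < i.val ∧ i.val < d - 1 then 1 else 0

/-- `e_d`, the last unit vector. -/
def eD (d : ℕ) : Fin d → ℤ := eV d (d - 1)

/-- `e_1`, the first unit vector. -/
def eOne (d : ℕ) : Fin d → ℤ := eV d 0

/-- The vertex set of the polytope `P_{h,d}`. -/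
def PhdVerts (h d : ℕ) : Set (Fin d → ℤ) :=
  ({0, eD d, eMid d, (h : ℤ) • (eMid d + eD d), ((h : ℤ) - 1) • eMid d + (h : ℤ) • eD d,
    (h : ℤ) • eMid d + ((h : ℤ) - 1) • eD d, eOne d + (4 : ℤ) • eD d, eOne d + (5 : ℤ) • eD d,
    eOne d + eMid d, eOne d + eMid d + eD d} : Set (Fin d → ℤ))
  ∪ {x | ∃ i : Fin d, 0 < i.val ∧ i.val < d - 1 ∧ (x = eV d i.val ∨ x = eV d i.val + eD d)}

/-- The polytope `P_{h,d} ⊂ ℝ^d`. -/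
def Phd (h d : ℕ) : Set (Fin d → ℝ) := convexHull ℝ (castPt '' PhdVerts h d)

lemma zgroup_top {n : ℕ} (H : AddSubgroup (Fin n → ℤ)) (hs : ∀ i, Pi.single i (1:ℤ) ∈ H) :
    H = ⊤ := by
  ext x
  simp only [AddSubgroup.mem_top, iff_true]
  have hx : x = ∑ i, x i • Pi.single i (1:ℤ) := by
    have := Finset.univ_sum_single x
    rw [← this]
    congr 1
    funext i
    ext j
    simp [Pi.single_apply]
  rw [hx]
  exact AddSubgroup.sum_mem _ fun i _ => AddSubgroup.zsmul_mem _ (hs i) _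

lemma rspan_top {n : ℕ} (M : Submodule ℝ (Fin n → ℝ)) (hs : ∀ i, Pi.single i (1:ℝ) ∈ M) :
    M = ⊤ := by
  ext x
  simp only [Submodule.mem_top, iff_true]
  have hx : x = ∑ i, x i • (Pi.single i (1:ℝ) : Fin n → ℝ) := by
    have := Finset.univ_sum_single x
    rw [← this]
    congr 1
    funext i
    ext j
    simp [Pi.single_apply]
  rw [hx]
  exact Submodule.sum_mem _ fun i _ => Submodule.smul_mem _ _ (hs i)

theorem stmt_5 (h d : ℕ) (hh : 1 ≤ h) (hd : 3 ≤ d) :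
    AddSubgroup.closure {a : Fin d → ℤ | castPt a ∈ Phd h d} = ⊤ ∧
    affineSpan ℝ (Phd h d) = ⊤ ∧
    AddSubgroup.closure (APts (Phd h d)) = ⊤ := by
  -- vertices are in the polytope
  have hvert : ∀ v ∈ PhdVerts h d, castPt v ∈ Phd h d := fun v hv =>
    subset_convexHull ℝ _ ⟨v, hv, rfl⟩
  -- membership of key vertices
  have h0 : (0 : Fin d → ℤ) ∈ PhdVerts h d := Or.inl (by left; rfl)
  have hD : eD d ∈ PhdVerts h d := Or.inl (by right; left; rfl)
  have h14 : eOne d + (4:ℤ) • eD d ∈ PhdVerts h d := Or.inl (by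
    right; right; right; right; right; right; left; rfl)
  have hEv : ∀ i : Fin d, 0 < i.val → i.val < d - 1 → eV d i.val ∈ PhdVerts h d :=
    fun i h1 h2 => Or.inr ⟨i, h1, h2, Or.inl rfl⟩
  refine ⟨?_, ?_, ?_⟩
  · -- part 1
    apply zgroup_top
    intro i
    have hmem : ∀ v ∈ PhdVerts h d, v ∈ AddSubgroup.closure {a : Fin d → ℤ | castPt a ∈ Phd h d} :=
      fun v hv => AddSubgroup.subset_closure (hvert v hv)
    rcases lt_or_ge i.val (d-1) with hlt | hge
    · rcases Nat.eq_zero_or_pos i.val with hz | hpos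
      · have hid : Pi.single i (1:ℤ) = (eOne d + (4:ℤ) • eD d) + (-4 : ℤ) • eD d := by
          funext j
          have hij := i.isLt
          simp only [Pi.single_apply, Pi.add_apply, Pi.smul_apply, smul_eq_mul,
            eOne, eD, eV, Fin.ext_iff, hz]
          split_ifs <;> omega
        rw [hid]
        exact add_mem (hmem _ h14) (AddSubgroup.zsmul_mem _ (hmem _ hD) _)
      · have hid : Pi.single i (1:ℤ) = eV d i.val := by
          funext j
          simp [Pi.single_apply, eV, Fin.ext_iff]
        rw [hid]
        exact hmem _ (hEv i hpos hlt)
    · have hvaleq : i.val = d - 1 := by have := i.isLt; omega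
      have hid : Pi.single i (1:ℤ) = eD d := by
        funext j
        simp [Pi.single_apply, eD, eV, Fin.ext_iff, hvaleq]
      rw [hid]
      exact hmem _ hD
  · -- part 2
    have hc0 : castPt (0 : Fin d → ℤ) = 0 := by funext j; simp [castPt]
    have hne : (Phd h d).Nonempty := ⟨castPt 0, hvert 0 h0⟩
    rw [AffineSubspace.affineSpan_eq_top_iff_vectorSpan_eq_top_of_nonempty ℝ (Fin d → ℝ) (Fin d → ℝ) hne]
    apply rspan_top
    intro i
    have hvs : ∀ v ∈ PhdVerts h d, castPt v ∈ vectorSpan ℝ (Phd h d) := by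
      intro v hv
      have := vsub_mem_vectorSpan ℝ (hvert v hv) (hvert 0 h0)
      rwa [vsub_eq_sub, hc0, sub_zero] at this
    rcases lt_or_ge i.val (d-1) with hlt | hge
    · rcases Nat.eq_zero_or_pos i.val with hz | hpos
      · have hid : (Pi.single i (1:ℝ) : Fin d → ℝ)
            = castPt (eOne d + (4:ℤ) • eD d) - (4:ℝ) • castPt (eD d) := by
          funext j
          have hij := i.isLt
          simp only [castPt, Pi.single_apply, Pi.sub_apply, Pi.add_apply, Pi.smul_apply,
            smul_eq_mul, eOne, eD, eV, Fin.ext_iff, hz]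
          push_cast
          split_ifs <;> norm_num <;> omega
        rw [hid]
        exact sub_mem (hvs _ h14) (Submodule.smul_mem _ _ (hvs _ hD))
      · have hid : (Pi.single i (1:ℝ) : Fin d → ℝ) = castPt (eV d i.val) := by
          funext j
          simp only [castPt, Pi.single_apply, eV, Fin.ext_iff]
          split_ifs <;> norm_num
        rw [hid]
        exact hvs _ (hEv i hpos hlt)
    · have hvaleq : i.val = d - 1 := by have := i.isLt; omega
      have hid : (Pi.single i (1:ℝ) : Fin d → ℝ) = castPt (eD d) := by
        funext j
        simp only [castPt, Pi.single_apply, eD, eV, Fin.ext_iff, hvaleq]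
        split_ifs <;> norm_num <;> omega
      rw [hid]
      exact hvs _ hD
  · -- part 3
    apply zgroup_top
    have hsnoc : ∀ v ∈ PhdVerts h d,
        (Fin.snoc v (1:ℤ) : Fin (d+1) → ℤ) ∈ AddSubgroup.closure (APts (Phd h d)) := by
      intro v hv
      apply AddSubgroup.subset_closure
      refine ⟨by simp, ?_⟩
      have hb : (fun i : Fin d => (Fin.snoc v (1:ℤ) : Fin (d+1) → ℤ) i.castSucc) = v := by
        funext i; simp
      rw [hb]
      exact hvert v hv
    intro j
    refine Fin.lastCases ?_ (fun i => ?_) j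
    · -- j = last : single = snoc 0 1
      have hid : Pi.single (Fin.last d) (1:ℤ) = (Fin.snoc (0 : Fin d → ℤ) 1 : Fin (d+1) → ℤ) := by
        funext k
        refine Fin.lastCases ?_ (fun m => ?_) k
        · simp
        · simp [Pi.single_apply, Fin.ext_iff]
          omega
      rw [hid]
      exact hsnoc _ h0
    · -- j = castSucc i
      rcases lt_or_ge i.val (d-1) with hlt | hge
      · rcases Nat.eq_zero_or_pos i.val with hz | hpos
        · have hid : Pi.single i.castSucc (1:ℤ)
              = (Fin.snoc (eOne d + (4:ℤ) • eD d) 1 : Fin (d+1) → ℤ)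
                + (-4 : ℤ) • (Fin.snoc (eD d) 1 : Fin (d+1) → ℤ)
                + (3 : ℤ) • (Fin.snoc (0 : Fin d → ℤ) 1 : Fin (d+1) → ℤ) := by
            funext k
            have hij := i.isLt
            refine Fin.lastCases ?_ (fun m => ?_) k
            · simp only [Pi.single_apply, Pi.add_apply, Pi.smul_apply, smul_eq_mul,
                Fin.snoc_last, Fin.ext_iff, Fin.val_last, Fin.coe_castSucc]
              split_ifs <;> omega
            · simp only [Pi.single_apply, Pi.add_apply, Pi.smul_apply, smul_eq_mul,
                Fin.snoc_castSucc, Fin.ext_iff, Fin.coe_castSucc, eOne, eD, eV,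
                Pi.zero_apply, hz]
              split_ifs <;> omega
          rw [hid]
          exact add_mem (add_mem (hsnoc _ h14) (AddSubgroup.zsmul_mem _ (hsnoc _ hD) _))
            (AddSubgroup.zsmul_mem _ (hsnoc _ h0) _)
        · have hid : Pi.single i.castSucc (1:ℤ)
              = (Fin.snoc (eV d i.val) 1 : Fin (d+1) → ℤ)
                + (-1 : ℤ) • (Fin.snoc (0 : Fin d → ℤ) 1 : Fin (d+1) → ℤ) := by
            funext k
            have hij := i.isLt
            refine Fin.lastCases ?_ (fun m => ?_) k
            · simp only [Pi.single_apply, Pi.add_apply, Pi.smul_apply, smul_eq_mul,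
                Fin.snoc_last, Fin.ext_iff, Fin.val_last, Fin.coe_castSucc]
              split_ifs <;> omega
            · simp only [Pi.single_apply, Pi.add_apply, Pi.smul_apply, smul_eq_mul,
                Fin.snoc_castSucc, Fin.ext_iff, Fin.coe_castSucc, eV, Pi.zero_apply]
              split_ifs <;> omega
          rw [hid]
          exact add_mem (hsnoc _ (hEv i hpos hlt)) (AddSubgroup.zsmul_mem _ (hsnoc _ h0) _)
      · have hvaleq : i.val = d - 1 := by have := i.isLt; omega
        have hid : Pi.single i.castSucc (1:ℤ)
            = (Fin.snoc (eD d) 1 : Fin (d+1) → ℤ)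
              + (-1 : ℤ) • (Fin.snoc (0 : Fin d → ℤ) 1 : Fin (d+1) → ℤ) := by
          funext k
          have hij := i.isLt
          refine Fin.lastCases ?_ (fun m => ?_) k
          · simp only [Pi.single_apply, Pi.add_apply, Pi.smul_apply, smul_eq_mul,
              Fin.snoc_last, Fin.ext_iff, Fin.val_last, Fin.coe_castSucc]
            split_ifs <;> omega
          · simp only [Pi.single_apply, Pi.add_apply, Pi.smul_apply, smul_eq_mul,
              Fin.snoc_castSucc, Fin.ext_iff, Fin.coe_castSucc, eD, eV, Pi.zero_apply, hvaleq]
            split_ifs <;> omega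
        rw [hid]
        exact add_mem (hsnoc _ hD) (AddSubgroup.zsmul_mem _ (hsnoc _ h0) _)
end
end

section
/- With P = P_{h,d} as defined (h ≥ 1, d ≥ 3), for each j = 1,…,h the point (u_j', 2) ∈ ℤ^{d+1}, where u_j' = e_1 + j(e_2+⋯+e_{d-1}) + (j+2)e_d, satisfies 2·(u_j',2) expressed as (u_{1,j-1},1)+(u_{1,j},1)+(u_8,1)+(u_9,1), where u_{1,j} = j(e_2+⋯+e_{d-1}+e_d); hence (u_j',2) ∈ ℝ_{≥0}A_P ∩ ℤ^{d+1}. -/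
open Finset

noncomputable section

/-- Append a last coordinate to a lattice point. -/
def app {d : ℕ} (a : Fin d → ℤ) (k : ℤ) : Fin (d+1) → ℤ := Fin.snoc a k

/-- `u_j' = e_1 + j(e_2+⋯+e_{d-1}) + (j+2)e_d`. -/
def ujp (d : ℕ) (j : ℤ) : Fin d → ℤ := eOne d + j • eMid d + (j + 2) • eD d

/-- `u_{1,j} = j(e_2+⋯+e_{d-1}+e_d)`. -/
def u1j (d : ℕ) (j : ℤ) : Fin d → ℤ := j • (eMid d + eD d)


lemma vert_mem_Phd {h d : ℕ} {v : Fin d → ℤ} (hv : v ∈ PhdVerts h d) :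
    castPt v ∈ Phd h d :=
  subset_convexHull ℝ _ (Set.mem_image_of_mem _ hv)

lemma u1j_mem_Phd {h d : ℕ} (hh : 1 ≤ h) (k : ℤ) (hk0 : 0 ≤ k) (hkh : k ≤ (h : ℤ)) :
    castPt (u1j d k) ∈ Phd h d := by
  have hhR : (0:ℝ) < (h:ℝ) := by exact_mod_cast hh
  set t : ℝ := (k : ℝ) / (h : ℝ) with ht
  have ht0 : 0 ≤ t := div_nonneg (by exact_mod_cast hk0) hhR.le
  have ht1 : t ≤ 1 := by
    rw [ht, div_le_one hhR]; exact_mod_cast hkh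
  have h0 : castPt (0 : Fin d → ℤ) ∈ Phd h d := by
    apply vert_mem_Phd; left; simp
  have h1 : castPt ((h : ℤ) • (eMid d + eD d)) ∈ Phd h d := by
    apply vert_mem_Phd; left
    right; right; right; left; rfl
  have key : castPt (u1j d k)
      = t • castPt ((h : ℤ) • (eMid d + eD d)) + (1 - t) • castPt (0 : Fin d → ℤ) := by
    funext i
    simp only [castPt, u1j, Pi.add_apply, Pi.smul_apply, smul_eq_mul, Pi.zero_apply]
    have hc : t * (h:ℝ) = (k:ℝ) := div_mul_cancel₀ _ hhR.ne'
    push_cast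
    rw [← hc]
    ring
  rw [key]
  exact (convex_convexHull ℝ _) h1 h0 ht0 (by linarith) (by ring)

lemma mem_APts_app {h d : ℕ} {a : Fin d → ℤ} (ha : castPt a ∈ Phd h d) :
    app a 1 ∈ APts (Phd h d) := by
  constructor
  · simp [app]
  · convert ha using 2
    funext i
    simp [app]

theorem stmt_6 (h d : ℕ) (hh : 1 ≤ h) (hd : 3 ≤ d)
    (j : ℤ) (hj1 : 1 ≤ j) (hjh : j ≤ (h : ℤ)) :
    (2 • app (ujp d j) 2 =
      app (u1j d (j - 1)) 1 + app (u1j d j) 1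
        + app (eOne d + (5 : ℤ) • eD d) 1 + app (eOne d + eMid d) 1) ∧
    castPt (app (ujp d j) 2) ∈ coneOf (castPt '' APts (Phd h d)) := by
  have hd1 : 1 < d - 1 := by omega
  -- the integer equality
  have eq1 : (2 • app (ujp d j) 2 =
      app (u1j d (j - 1)) 1 + app (u1j d j) 1
        + app (eOne d + (5 : ℤ) • eD d) 1 + app (eOne d + eMid d) 1) := by
    funext i
    induction i using Fin.lastCases with
    | last => simp [app]
    | cast i =>
      simp only [app, Pi.smul_apply, Pi.add_apply, Fin.snoc_castSucc, ujp, u1j,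
        smul_eq_mul, Pi.intCast_apply]
      ring
  refine ⟨eq1, ?_⟩
  have m1 : app (u1j d (j-1)) 1 ∈ APts (Phd h d) :=
    mem_APts_app (u1j_mem_Phd hh (j-1) (by omega) (by omega))
  have m2 : app (u1j d j) 1 ∈ APts (Phd h d) :=
    mem_APts_app (u1j_mem_Phd hh j (by omega) hjh)
  have m3 : app (eOne d + (5 : ℤ) • eD d) 1 ∈ APts (Phd h d) := by
    apply mem_APts_app; apply vert_mem_Phd; left
    right; right; right; right; right; right; right; left; rfl
  have m4 : app (eOne d + eMid d) 1 ∈ APts (Phd h d) := by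
    apply mem_APts_app; apply vert_mem_Phd; left
    right; right; right; right; right; right; right; right; left; rfl
  refine ⟨4, fun _ => (1/2 : ℝ),
    ![castPt (app (u1j d (j-1)) 1), castPt (app (u1j d j) 1),
      castPt (app (eOne d + (5 : ℤ) • eD d) 1), castPt (app (eOne d + eMid d) 1)],
    fun i => by norm_num, ?_, ?_⟩
  · intro i
    fin_cases i
    · exact Set.mem_image_of_mem _ m1
    · exact Set.mem_image_of_mem _ m2
    · exact Set.mem_image_of_mem _ m3
    · exact Set.mem_image_of_mem _ m4
  · rw [Fin.sum_univ_four]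
    funext i
    have := congrFun eq1 i
    simp only [Pi.smul_apply, Pi.add_apply, smul_eq_mul, two_smul] at this
    have thisR : (app (ujp d j) 2 i : ℝ) + (app (ujp d j) 2 i : ℝ)
        = (app (u1j d (j-1)) 1 i : ℝ) + (app (u1j d j) 1 i : ℝ)
          + (app (eOne d + (5:ℤ) • eD d) 1 i : ℝ) + (app (eOne d + eMid d) 1 i : ℝ) := by
      exact_mod_cast this
    simp only [castPt, Matrix.cons_val_zero, Matrix.cons_val_one, Matrix.head_cons,
      Matrix.cons_val_two, Matrix.tail_cons, Matrix.cons_val_three, Pi.add_apply,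
      Pi.smul_apply, smul_eq_mul]
    linarith
end
end

section
/- With P = P_{h,d} as defined (h ≥ 1, d ≥ 3), for each j = 1,…,h the point (u_j',2) with u_j' = e_1 + j(e_2+⋯+e_{d-1}) + (j+2)e_d does not belong to the monoid ℤ_{≥0}A_P generated by A_P = {(α,1) : α ∈ P ∩ ℤ^d}. In particular P_{h,d} is not normal. -/
open Finset

noncomputable section

/-!
Project onto the coordinates `(x₁, x₂, x_d)`. Every vertex of `P_{h,d}`, hence every point of it,
satisfies the six linear inequalities of `shadowRegion`. In a decomposition of `(u_j', 2)` as a sum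
of two points of `A_P` the first coordinates are `1` and `0`; the inequalities force
`4 ≤ x_d + 4x₂ ≤ 5` on the first summand and `|x_d - x₂| ≤ 1` on the second, so `x_d - x₂ ∈ [1, 3]`
on the first, and then no integer `x₂` fits.

For non-normality, `(u_1', 2)` lies in the real cone and in the group spanned by `A_P`:
`2 (u_1', 2) = u_8 + u_9 + u_3 + u_2` and `(u_1', 2) = u_10 + 2 u_2 - u_1` (all at height one).
-/

theorem AddSubmonoid.exists_add_eq_of_mem_closure {M : Type*} [AddCommMonoid M] {s : Set M}
    (φ : M →+ ℤ) (hφ : ∀ a ∈ s, φ a = 1) {x : M} (hx : x ∈ AddSubmonoid.closure s)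
    (hx₂ : φ x = 2) : ∃ a ∈ s, ∃ b ∈ s, a + b = x := by
  obtain ⟨l, hl, rfl⟩ := AddSubmonoid.exists_multiset_of_mem_closure hx
  have hcard : Multiset.card l = 2 := by
    rw [map_multiset_sum, Multiset.map_congr rfl (fun a ha => hφ a (hl a ha)),
      Multiset.map_const', Multiset.sum_replicate, nsmul_one] at hx₂
    exact_mod_cast hx₂
  obtain ⟨a, b, rfl⟩ := Multiset.card_eq_two.1 hcard
  exact ⟨a, hl a (by simp), b, hl b (by simp), by simp⟩

theorem castPt_mem_coneOf_of_nsmul_eq_sum {d m k : ℕ} {A : Set (Fin d → ℤ)} (hk : 0 < k)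
    (v : Fin m → Fin d → ℤ) (hv : ∀ i, v i ∈ A) {x : Fin d → ℤ} (hx : k • x = ∑ i, v i) :
    castPt x ∈ coneOf (castPt '' A) := by
  refine ⟨m, fun _ => (k : ℝ)⁻¹, fun i => castPt (v i), fun _ => by positivity,
    fun i => ⟨v i, hv i, rfl⟩, ?_⟩
  have hcast : (k : ℝ) • castPt x = ∑ i, castPt (v i) := by
    funext l
    simpa [castPt, Finset.sum_apply] using congrArg (fun y : Fin d → ℤ => (y l : ℝ)) hx
  rw [← Finset.smul_sum, ← hcast, smul_smul, inv_mul_cancel₀ (by positivity), one_smul]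

theorem app_mem_APts {d : ℕ} {P : Set (Fin d → ℝ)} {v : Fin d → ℤ} (hv : castPt v ∈ P) :
    app v 1 ∈ APts P :=
  ⟨by simp [app], by simpa [app] using hv⟩

theorem app_mem_APts_Phd {h d : ℕ} {v : Fin d → ℤ} (hv : v ∈ PhdVerts h d) :
    app v 1 ∈ APts (Phd h d) :=
  app_mem_APts (subset_convexHull ℝ _ ⟨v, hv, rfl⟩)

def shadowMap (R : Type*) [Semiring R] (n : ℕ) : (Fin (n + 3) → R) →ₗ[R] R × R × R :=
  (LinearMap.proj 0).prod ((LinearMap.proj 1).prod (LinearMap.proj (Fin.last _)))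

@[simp] theorem shadowMap_apply (R : Type*) [Semiring R] (n : ℕ) (x : Fin (n + 3) → R) :
    shadowMap R n x = (x 0, x 1, x (Fin.last _)) := rfl

def shadowRegion (R : Type*) [Ring R] [LE R] (h : ℕ) : Set (R × R × R) :=
  {(x, y, z) : R × R × R | 0 ≤ x ∧ x ≤ 1 ∧ 4 * x ≤ z + 4 * y ∧
    z + 4 * y + 5 * ((h : R) - 1) * x ≤ 5 * h ∧ z - y - 4 * x ≤ 1 ∧ y - z ≤ 1}

theorem convex_shadowRegion (h : ℕ) : Convex ℝ (shadowRegion ℝ h) := by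
  rintro ⟨x, y, z⟩ ⟨hx₀, hx₁, hx₂, hx₃, hx₄, hx₅⟩ ⟨x', y', z'⟩ ⟨hy₀, hy₁, hy₂, hy₃, hy₄, hy₅⟩
    a b ha hb hab
  simp only [Prod.smul_mk, Prod.mk_add_mk, smul_eq_mul]
  refine ⟨?_, ?_, ?_, ?_, ?_, ?_⟩ <;> nlinarith

theorem shadowMap_castPt_mem_shadowRegion_iff {h n : ℕ} (v : Fin (n + 3) → ℤ) :
    shadowMap ℝ n (castPt v) ∈ shadowRegion ℝ h ↔ shadowMap ℤ n v ∈ shadowRegion ℤ h := by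
  simp only [shadowMap_apply, shadowRegion, Set.mem_ofPred_eq, castPt]
  norm_cast

theorem shadowMap_mem_shadowRegion_of_mem_PhdVerts {h n : ℕ} (hh : 1 ≤ h)
    {v : Fin (n + 3) → ℤ} (hv : v ∈ PhdVerts h (n + 3)) : shadowMap ℤ n v ∈ shadowRegion ℤ h := by
  rcases hv with hv | ⟨i, hi₀, hi, rfl | rfl⟩
  · simp only [Set.mem_insert_iff, Set.mem_singleton_iff] at hv
    rcases hv with rfl | rfl | rfl | rfl | rfl | rfl | rfl | rfl | rfl | rfl <;>
      simp [shadowRegion, eOne, eMid, eD, eV] <;> omega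
  all_goals
    simp [shadowRegion, eD, eV, hi₀.ne]
    split_ifs <;> omega

theorem Phd_subset_preimage_shadowRegion {h n : ℕ} (hh : 1 ≤ h) :
    Phd h (n + 3) ⊆ shadowMap ℝ n ⁻¹' shadowRegion ℝ h := by
  refine convexHull_min ?_ ((convex_shadowRegion h).linear_preimage _)
  rintro _ ⟨v, hv, rfl⟩
  exact (shadowMap_castPt_mem_shadowRegion_iff v).2
    (shadowMap_mem_shadowRegion_of_mem_PhdVerts hh hv)

theorem shadowMap_init_mem_shadowRegion {h n : ℕ} (hh : 1 ≤ h) {b : Fin (n + 3 + 1) → ℤ}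
    (hb : b ∈ APts (Phd h (n + 3))) : shadowMap ℤ n (Fin.init b) ∈ shadowRegion ℤ h :=
  (shadowMap_castPt_mem_shadowRegion_iff _).1 (Phd_subset_preimage_shadowRegion hh hb.2)

theorem shadowRegion_add_ne {h : ℕ} {p q : ℤ × ℤ × ℤ} (hp : p ∈ shadowRegion ℤ h)
    (hq : q ∈ shadowRegion ℤ h) (j : ℤ) : p + q ≠ (1, j, j + 2) := by
  obtain ⟨x, y, z⟩ := p
  obtain ⟨x', y', z'⟩ := q
  obtain ⟨hx₀, hx₁, hx₂, hx₃, hx₄, hx₅⟩ := hp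
  obtain ⟨hy₀, hy₁, hy₂, hy₃, hy₄, hy₅⟩ := hq
  simp only [Prod.mk_add_mk, ne_eq, Prod.mk.injEq, not_and]
  intro hx hy hz
  obtain ⟨rfl, rfl⟩ | ⟨rfl, rfl⟩ : x = 1 ∧ x' = 0 ∨ x = 0 ∧ x' = 1 := by omega
  all_goals omega

theorem shadowMap_ujp (n : ℕ) (j : ℤ) : shadowMap ℤ n (ujp (n + 3) j) = (1, j, j + 2) := by
  simp [ujp, eOne, eMid, eD, eV]

theorem app_ujp_not_mem_closure {h n : ℕ} (hh : 1 ≤ h) (j : ℤ) :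
    app (ujp (n + 3) j) 2 ∉ AddSubmonoid.closure (APts (Phd h (n + 3))) := by
  intro hmem
  obtain ⟨a, ha, b, hb, hab⟩ := AddSubmonoid.exists_add_eq_of_mem_closure
    (Pi.evalAddMonoidHom (fun _ => ℤ) (Fin.last _)) (fun a ha => ha.1) hmem (by simp [app])
  refine shadowRegion_add_ne (shadowMap_init_mem_shadowRegion hh ha)
    (shadowMap_init_mem_shadowRegion hh hb) j ?_
  rw [← map_add, ← shadowMap_ujp]
  exact congrArg (shadowMap ℤ n) ((congrArg Fin.init hab).trans (Fin.init_snoc _ _))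

theorem two_nsmul_app_ujp_one (d : ℕ) :
    2 • app (ujp d 1) 2 = app (eOne d + (5 : ℤ) • eD d) 1 + app (eOne d + eMid d) 1
      + app (eMid d) 1 + app (eD d) 1 := by
  funext i
  refine Fin.lastCases ?_ (fun i => ?_) i <;> simp [app, ujp]
  ring

theorem app_ujp_one_eq (d : ℕ) :
    app (ujp d 1) 2 = app (eOne d + eMid d + eD d) 1 + app (eD d) 1 + app (eD d) 1
      - app 0 1 := by
  funext i
  refine Fin.lastCases ?_ (fun i => ?_) i <;> simp [app, ujp]
  ring

theorem stmt_7 (h d : ℕ) (hh : 1 ≤ h) (hd : 3 ≤ d) :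
    (∀ j : ℤ, 1 ≤ j → j ≤ (h : ℤ) →
      app (ujp d j) 2 ∉ AddSubmonoid.closure (APts (Phd h d))) ∧
    {b : Fin (d+1) → ℤ | castPt b ∈ coneOf (castPt '' APts (Phd h d)) ∧
        b ∈ AddSubgroup.closure (APts (Phd h d))} ≠
      (AddSubmonoid.closure (APts (Phd h d)) : Set (Fin (d+1) → ℤ)) := by
  obtain ⟨n, rfl⟩ : ∃ n, d = n + 3 := ⟨d - 3, by omega⟩
  refine ⟨fun j _ _ => app_ujp_not_mem_closure hh j, fun hnormal => ?_⟩
  have hvert {v} (hv : v ∈ PhdVerts h (n + 3)) := AddSubgroup.subset_closure (app_mem_APts_Phd hv)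
  have hcone : castPt (app (ujp (n + 3) 1) 2) ∈ coneOf (castPt '' APts (Phd h (n + 3))) := by
    refine castPt_mem_coneOf_of_nsmul_eq_sum two_pos
      ![app (eOne (n + 3) + (5 : ℤ) • eD (n + 3)) 1, app (eOne (n + 3) + eMid (n + 3)) 1,
        app (eMid (n + 3)) 1, app (eD (n + 3)) 1]
      (fun i => ?_) ((two_nsmul_app_ujp_one _).trans (by simp [Fin.sum_univ_four]))
    fin_cases i <;> exact app_mem_APts_Phd (Or.inl (by simp))
  have hgroup : app (ujp (n + 3) 1) 2 ∈ AddSubgroup.closure (APts (Phd h (n + 3))) := by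
    rw [app_ujp_one_eq]
    exact sub_mem (add_mem (add_mem (hvert (Or.inl (by simp))) (hvert (Or.inl (by simp))))
      (hvert (Or.inl (by simp)))) (hvert (Or.inl (by simp)))
  exact app_ujp_not_mem_closure hh 1 (by rw [← SetLike.mem_coe, ← hnormal]; exact ⟨hcone, hgroup⟩)
end
end

section
/- Let h ≥ 2 and d ≥ 3. The lattice points of the polytope P_{h,d} are exactly its vertices together with the points u_{3,j} = (j+1)(e_2+⋯+e_{d-1}) + j e_d for j = 1,…,h-2, u_{2,j} = j(e_2+⋯+e_{d-1}) + (j+1)e_d for j = 1,…,h-2, and u_{1,j} = j(e_2+⋯+e_{d-1}+e_d) for j = 1,…,h-1. -/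
open Finset

noncomputable section

/-- `u_{3,j} = (j+1)(e_2+⋯+e_{d-1}) + j e_d`. -/
def u3j (d : ℕ) (j : ℤ) : Fin d → ℤ := (j + 1) • eMid d + j • eD d

/-- `u_{2,j} = j(e_2+⋯+e_{d-1}) + (j+1)e_d`. -/
def u2j (d : ℕ) (j : ℤ) : Fin d → ℤ := j • eMid d + (j + 1) • eD d

section AuxStmt8
variable {d : ℕ}

/-- generic "symmetric" vertex shape -/
def vtx (d : ℕ) (α β γ : ℤ) : Fin d → ℤ := fun i =>
  if i.val = 0 then α else if i.val = d - 1 then γ else β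

/-- generic v_i / v_i' shape -/
def vtx2 (d : ℕ) (i₀ : Fin d) (γ : ℤ) : Fin d → ℤ := fun i =>
  (if i.val = i₀.val then 1 else 0) + (if i.val = d - 1 then γ else 0)

lemma vtx_at0 (α β γ : ℤ) (i : Fin d) (h0 : i.val = 0) : vtx d α β γ i = α := by
  simp [vtx, h0]

lemma vtx_atL (hd : 3 ≤ d) (α β γ : ℤ) (i : Fin d) (hL : i.val = d - 1) :
    vtx d α β γ i = γ := by
  simp only [vtx]
  split_ifs <;> first | rfl | omega

lemma vtx_atM (α β γ : ℤ) (i : Fin d) (hm : 0 < i.val ∧ i.val < d - 1) :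
    vtx d α β γ i = β := by
  have h1 : ¬ i.val = 0 := by omega
  have h2 : ¬ i.val = d - 1 := by omega
  simp [vtx, h1, h2]

lemma vtx2_at0 (i₀ : Fin d) (γ : ℤ) (hm : 0 < i₀.val ∧ i₀.val < d - 1) (i : Fin d)
    (h0 : i.val = 0) : vtx2 d i₀ γ i = 0 := by
  have h1 : ¬ i.val = i₀.val := by omega
  have h2 : ¬ i.val = d - 1 := by omega
  simp [vtx2, h1, h2]

lemma vtx2_atL (i₀ : Fin d) (γ : ℤ) (hm : 0 < i₀.val ∧ i₀.val < d - 1) (i : Fin d)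
    (hL : i.val = d - 1) : vtx2 d i₀ γ i = γ := by
  simp only [vtx2]
  split_ifs <;> omega

lemma vtx2_atM (i₀ : Fin d) (γ : ℤ) (hm0 : 0 < i₀.val ∧ i₀.val < d - 1) (i : Fin d)
    (hm : 0 < i.val ∧ i.val < d - 1) :
    vtx2 d i₀ γ i = if i.val = i₀.val then 1 else 0 := by
  simp only [vtx2]
  split_ifs <;> omega

/-- every element of `PhdVerts` is of one of the two generic shapes -/
lemma verts_shape (h : ℕ) (hd : 3 ≤ d) {a : Fin d → ℤ} (ha : a ∈ PhdVerts h d) :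
    (∃ α β γ : ℤ,
      ((α = 0 ∧ β = 0 ∧ γ = 0) ∨ (α = 0 ∧ β = 0 ∧ γ = 1) ∨ (α = 0 ∧ β = 1 ∧ γ = 0) ∨
       (α = 0 ∧ β = h ∧ γ = h) ∨ (α = 0 ∧ β = (h:ℤ) - 1 ∧ γ = h) ∨
       (α = 0 ∧ β = h ∧ γ = (h:ℤ) - 1) ∨ (α = 1 ∧ β = 0 ∧ γ = 4) ∨
       (α = 1 ∧ β = 0 ∧ γ = 5) ∨ (α = 1 ∧ β = 1 ∧ γ = 0) ∨ (α = 1 ∧ β = 1 ∧ γ = 1)) ∧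
      a = vtx d α β γ) ∨
    (∃ i₀ : Fin d, (0 < i₀.val ∧ i₀.val < d - 1) ∧ ∃ γ : ℤ, (γ = 0 ∨ γ = 1) ∧
      a = vtx2 d i₀ γ) := by
  have hd1 : d - 1 ≠ 0 := by omega
  rcases ha with ha | ⟨i₀, h1, h2, ha | ha⟩
  · left
    simp only [Set.mem_insert_iff, Set.mem_singleton_iff] at ha
    rcases ha with rfl|rfl|rfl|rfl|rfl|rfl|rfl|rfl|rfl|rfl
    · exact ⟨0,0,0, Or.inl ⟨rfl,rfl,rfl⟩, by funext i; simp only [vtx, Pi.zero_apply]; split_ifs <;> rfl⟩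
    · refine ⟨0,0,1, Or.inr (Or.inl ⟨rfl,rfl,rfl⟩), ?_⟩
      funext i
      simp only [vtx, eD, eV]
      split_ifs <;> omega
    · refine ⟨0,1,0, Or.inr (Or.inr (Or.inl ⟨rfl,rfl,rfl⟩)), ?_⟩
      funext i
      simp only [vtx, eMid]
      have := i.isLt
      split_ifs <;> omega
    · refine ⟨0,h,h, Or.inr (Or.inr (Or.inr (Or.inl ⟨rfl,rfl,rfl⟩))), ?_⟩
      funext i
      simp only [vtx, eMid, eD, eV, Pi.smul_apply, Pi.add_apply, smul_eq_mul]
      have := i.isLt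
      split_ifs <;> omega
    · refine ⟨0,(h:ℤ)-1,h, Or.inr (Or.inr (Or.inr (Or.inr (Or.inl ⟨rfl,rfl,rfl⟩)))), ?_⟩
      funext i
      simp only [vtx, eMid, eD, eV, Pi.smul_apply, Pi.add_apply, smul_eq_mul]
      have := i.isLt
      split_ifs <;> omega
    · refine ⟨0,h,(h:ℤ)-1, Or.inr (Or.inr (Or.inr (Or.inr (Or.inr (Or.inl ⟨rfl,rfl,rfl⟩))))), ?_⟩
      funext i
      simp only [vtx, eMid, eD, eV, Pi.smul_apply, Pi.add_apply, smul_eq_mul]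
      have := i.isLt
      split_ifs <;> omega
    · refine ⟨1,0,4, Or.inr (Or.inr (Or.inr (Or.inr (Or.inr (Or.inr (Or.inl ⟨rfl,rfl,rfl⟩)))))), ?_⟩
      funext i
      simp only [vtx, eOne, eD, eV, Pi.smul_apply, Pi.add_apply, smul_eq_mul]
      have := i.isLt
      split_ifs <;> omega
    · refine ⟨1,0,5, Or.inr (Or.inr (Or.inr (Or.inr (Or.inr (Or.inr (Or.inr (Or.inl ⟨rfl,rfl,rfl⟩))))))), ?_⟩
      funext i
      simp only [vtx, eOne, eD, eV, Pi.smul_apply, Pi.add_apply, smul_eq_mul]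
      have := i.isLt
      split_ifs <;> omega
    · refine ⟨1,1,0, Or.inr (Or.inr (Or.inr (Or.inr (Or.inr (Or.inr (Or.inr (Or.inr (Or.inl ⟨rfl,rfl,rfl⟩)))))))), ?_⟩
      funext i
      simp only [vtx, eOne, eMid, eV, Pi.add_apply]
      have := i.isLt
      split_ifs <;> omega
    · refine ⟨1,1,1, Or.inr (Or.inr (Or.inr (Or.inr (Or.inr (Or.inr (Or.inr (Or.inr (Or.inr (⟨rfl,rfl,rfl⟩))))))))), ?_⟩
      funext i
      simp only [vtx, eOne, eMid, eD, eV, Pi.add_apply]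
      have := i.isLt
      split_ifs <;> omega
  · right
    refine ⟨i₀, ⟨h1, h2⟩, 0, Or.inl rfl, ?_⟩
    subst ha
    funext i
    simp [vtx2, eV]
  · right
    refine ⟨i₀, ⟨h1, h2⟩, 1, Or.inr rfl, ?_⟩
    subst ha
    funext i
    rfl

end AuxStmt8
section AuxStmt8B
variable {d : ℕ}

lemma hull_bound3 (h : ℕ) (p q r b : ℝ) (i j k : Fin d)
    (H : ∀ a ∈ PhdVerts h d, p * (a i : ℝ) + q * (a j : ℝ) + r * (a k : ℝ) ≤ b) :
    ∀ x ∈ Phd h d, p * x i + q * x j + r * x k ≤ b := by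
  intro x hx
  have hsub : Phd h d ⊆ {y : Fin d → ℝ | (p • (LinearMap.proj i) + q • (LinearMap.proj j)
      + r • (LinearMap.proj k) : (Fin d → ℝ) →ₗ[ℝ] ℝ) y ≤ b} := by
    apply convexHull_min
    · rintro y ⟨a, ha, rfl⟩
      exact H a ha
    · exact convex_halfSpace_le (LinearMap.isLinear _) b
  exact hsub hx
section AuxStmt8C
variable {d : ℕ}

lemma castPt_apply (a : Fin d → ℤ) (i : Fin d) : castPt a i = (a i : ℝ) := rfl

lemma hull_bound3Z (h : ℕ) (p q r b : ℤ) (i j k : Fin d)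
    (H : ∀ v ∈ PhdVerts h d, p * v i + q * v j + r * v k ≤ b)
    {a : Fin d → ℤ} (ha : castPt a ∈ Phd h d) :
    p * a i + q * a j + r * a k ≤ b := by
  have h1 := hull_bound3 h (p:ℝ) (q:ℝ) (r:ℝ) (b:ℝ) i j k
    (fun v hv => by
      have := H v hv
      push_cast
      exact_mod_cast this) (castPt a) ha
  rw [castPt_apply, castPt_apply, castPt_apply] at h1
  exact_mod_cast h1

variable (h : ℕ) (hh : 2 ≤ h) (hd : 3 ≤ d) {a : Fin d → ℤ} (ha : castPt a ∈ Phd h d)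

include hh hd ha

lemma L1 (k : Fin d) : 0 ≤ a k := by
  have := hull_bound3Z h (-1) 0 0 0 k k k ?_ ha
  · linarith
  rintro v hv
  rcases verts_shape h hd hv with ⟨α, β, γ, hc, rfl⟩ | ⟨i₀, hm0, γ, hγ, rfl⟩
  · simp only [vtx]
    rcases hc with ⟨rfl,rfl,rfl⟩|⟨rfl,rfl,rfl⟩|⟨rfl,rfl,rfl⟩|⟨rfl,rfl,rfl⟩|⟨rfl,rfl,rfl⟩|⟨rfl,rfl,rfl⟩|⟨rfl,rfl,rfl⟩|⟨rfl,rfl,rfl⟩|⟨rfl,rfl,rfl⟩|⟨rfl,rfl,rfl⟩ <;>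
      split_ifs <;> omega
  · rcases hγ with rfl | rfl <;> (simp only [vtx2]; split_ifs <;> omega)

lemma L2 (i0 : Fin d) (h0 : i0.val = 0) : a i0 ≤ 1 := by
  have := hull_bound3Z h 1 0 0 1 i0 i0 i0 ?_ ha
  · linarith
  rintro v hv
  rcases verts_shape h hd hv with ⟨α, β, γ, hc, rfl⟩ | ⟨i₀, hm0, γ, hγ, rfl⟩
  · rw [vtx_at0 _ _ _ _ h0]
    rcases hc with ⟨rfl,rfl,rfl⟩|⟨rfl,rfl,rfl⟩|⟨rfl,rfl,rfl⟩|⟨rfl,rfl,rfl⟩|⟨rfl,rfl,rfl⟩|⟨rfl,rfl,rfl⟩|⟨rfl,rfl,rfl⟩|⟨rfl,rfl,rfl⟩|⟨rfl,rfl,rfl⟩|⟨rfl,rfl,rfl⟩ <;> omega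
  · rw [vtx2_at0 _ _ hm0 _ h0]; omega

lemma L3 (i i0 : Fin d) (hm : 0 < i.val ∧ i.val < d - 1) (h0 : i0.val = 0) :
    a i + ((h:ℤ) - 1) * a i0 ≤ h := by
  have := hull_bound3Z h 1 ((h:ℤ)-1) 0 h i i0 i0 ?_ ha
  · linarith
  rintro v hv
  rcases verts_shape h hd hv with ⟨α, β, γ, hc, rfl⟩ | ⟨i₀, hm0, γ, hγ, rfl⟩
  · rw [vtx_atM _ _ _ _ hm, vtx_at0 _ _ _ _ h0]
    rcases hc with ⟨rfl,rfl,rfl⟩|⟨rfl,rfl,rfl⟩|⟨rfl,rfl,rfl⟩|⟨rfl,rfl,rfl⟩|⟨rfl,rfl,rfl⟩|⟨rfl,rfl,rfl⟩|⟨rfl,rfl,rfl⟩|⟨rfl,rfl,rfl⟩|⟨rfl,rfl,rfl⟩|⟨rfl,rfl,rfl⟩ <;> omega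
  · rw [vtx2_atM _ _ hm0 _ hm, vtx2_at0 _ _ hm0 _ h0]
    rcases hγ with rfl | rfl <;> split_ifs <;> omega

lemma L4 (iL i0 : Fin d) (hL : iL.val = d - 1) (h0 : i0.val = 0) :
    a iL + ((h:ℤ) - 5) * a i0 ≤ h := by
  have := hull_bound3Z h 1 ((h:ℤ)-5) 0 h iL i0 i0 ?_ ha
  · linarith
  rintro v hv
  rcases verts_shape h hd hv with ⟨α, β, γ, hc, rfl⟩ | ⟨i₀, hm0, γ, hγ, rfl⟩
  · rw [vtx_atL hd _ _ _ _ hL, vtx_at0 _ _ _ _ h0]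
    rcases hc with ⟨rfl,rfl,rfl⟩|⟨rfl,rfl,rfl⟩|⟨rfl,rfl,rfl⟩|⟨rfl,rfl,rfl⟩|⟨rfl,rfl,rfl⟩|⟨rfl,rfl,rfl⟩|⟨rfl,rfl,rfl⟩|⟨rfl,rfl,rfl⟩|⟨rfl,rfl,rfl⟩|⟨rfl,rfl,rfl⟩ <;> omega
  · rw [vtx2_atL _ _ hm0 _ hL, vtx2_at0 _ _ hm0 _ h0]
    rcases hγ with rfl | rfl <;> omega

lemma L5 (i iL : Fin d) (hm : 0 < i.val ∧ i.val < d - 1) (hL : iL.val = d - 1) :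
    a i ≤ a iL + 1 := by
  have := hull_bound3Z h 1 (-1) 0 1 i iL iL ?_ ha
  · linarith
  rintro v hv
  rcases verts_shape h hd hv with ⟨α, β, γ, hc, rfl⟩ | ⟨i₀, hm0, γ, hγ, rfl⟩
  · rw [vtx_atM _ _ _ _ hm, vtx_atL hd _ _ _ _ hL]
    rcases hc with ⟨rfl,rfl,rfl⟩|⟨rfl,rfl,rfl⟩|⟨rfl,rfl,rfl⟩|⟨rfl,rfl,rfl⟩|⟨rfl,rfl,rfl⟩|⟨rfl,rfl,rfl⟩|⟨rfl,rfl,rfl⟩|⟨rfl,rfl,rfl⟩|⟨rfl,rfl,rfl⟩|⟨rfl,rfl,rfl⟩ <;> omega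
  · rw [vtx2_atM _ _ hm0 _ hm, vtx2_atL _ _ hm0 _ hL]
    rcases hγ with rfl | rfl <;> split_ifs <;> omega

lemma L6 (i i0 iL : Fin d) (hm : 0 < i.val ∧ i.val < d - 1) (h0 : i0.val = 0)
    (hL : iL.val = d - 1) : a iL ≤ a i + 1 + 4 * a i0 := by
  have := hull_bound3Z h 1 (-1) (-4) 1 iL i i0 ?_ ha
  · linarith
  rintro v hv
  rcases verts_shape h hd hv with ⟨α, β, γ, hc, rfl⟩ | ⟨i₀, hm0, γ, hγ, rfl⟩
  · rw [vtx_atM _ _ _ _ hm, vtx_atL hd _ _ _ _ hL, vtx_at0 _ _ _ _ h0]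
    rcases hc with ⟨rfl,rfl,rfl⟩|⟨rfl,rfl,rfl⟩|⟨rfl,rfl,rfl⟩|⟨rfl,rfl,rfl⟩|⟨rfl,rfl,rfl⟩|⟨rfl,rfl,rfl⟩|⟨rfl,rfl,rfl⟩|⟨rfl,rfl,rfl⟩|⟨rfl,rfl,rfl⟩|⟨rfl,rfl,rfl⟩ <;> omega
  · rw [vtx2_atM _ _ hm0 _ hm, vtx2_atL _ _ hm0 _ hL, vtx2_at0 _ _ hm0 _ h0]
    rcases hγ with rfl | rfl <;> split_ifs <;> omega

lemma L7 (i j i0 : Fin d) (hm : 0 < i.val ∧ i.val < d - 1)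
    (hm' : 0 < j.val ∧ j.val < d - 1) (h0 : i0.val = 0) :
    a i - a j ≤ 1 - a i0 := by
  have := hull_bound3Z h 1 (-1) 1 1 i j i0 ?_ ha
  · linarith
  rintro v hv
  rcases verts_shape h hd hv with ⟨α, β, γ, hc, rfl⟩ | ⟨i₀, hm0, γ, hγ, rfl⟩
  · rw [vtx_atM _ _ _ _ hm, vtx_atM _ _ _ _ hm', vtx_at0 _ _ _ _ h0]
    rcases hc with ⟨rfl,rfl,rfl⟩|⟨rfl,rfl,rfl⟩|⟨rfl,rfl,rfl⟩|⟨rfl,rfl,rfl⟩|⟨rfl,rfl,rfl⟩|⟨rfl,rfl,rfl⟩|⟨rfl,rfl,rfl⟩|⟨rfl,rfl,rfl⟩|⟨rfl,rfl,rfl⟩|⟨rfl,rfl,rfl⟩ <;> omega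
  · rw [vtx2_atM _ _ hm0 _ hm, vtx2_atM _ _ hm0 _ hm', vtx2_at0 _ _ hm0 _ h0]
    rcases hγ with rfl | rfl <;> split_ifs <;> omega

lemma L8 (i j : Fin d) (hm : 0 < i.val ∧ i.val < d - 1)
    (hm' : 0 < j.val ∧ j.val < d - 1) :
    (h : ℤ) * a i - ((h:ℤ) - 1) * a j ≤ h := by
  have := hull_bound3Z h (h:ℤ) (-((h:ℤ)-1)) 0 h i j j ?_ ha
  · linarith
  rintro v hv
  rcases verts_shape h hd hv with ⟨α, β, γ, hc, rfl⟩ | ⟨i₀, hm0, γ, hγ, rfl⟩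
  · rw [vtx_atM _ _ _ _ hm, vtx_atM _ _ _ _ hm']
    rcases hc with ⟨rfl,rfl,rfl⟩|⟨rfl,rfl,rfl⟩|⟨rfl,rfl,rfl⟩|⟨rfl,rfl,rfl⟩|⟨rfl,rfl,rfl⟩|⟨rfl,rfl,rfl⟩|⟨rfl,rfl,rfl⟩|⟨rfl,rfl,rfl⟩|⟨rfl,rfl,rfl⟩|⟨rfl,rfl,rfl⟩ <;> nlinarith [hh]
  · rw [vtx2_atM _ _ hm0 _ hm, vtx2_atM _ _ hm0 _ hm']
    rcases hγ with rfl | rfl <;> split_ifs <;> omega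

lemma L9 (i j k : Fin d) (hm : 0 < i.val ∧ i.val < d - 1)
    (hm' : 0 < j.val ∧ j.val < d - 1) (hm'' : 0 < k.val ∧ k.val < d - 1)
    (hij : i.val ≠ j.val) : a i + a j - 2 * a k ≤ 1 := by
  have := hull_bound3Z h 1 1 (-2) 1 i j k ?_ ha
  · linarith
  rintro v hv
  rcases verts_shape h hd hv with ⟨α, β, γ, hc, rfl⟩ | ⟨i₀, hm0, γ, hγ, rfl⟩
  · rw [vtx_atM _ _ _ _ hm, vtx_atM _ _ _ _ hm', vtx_atM _ _ _ _ hm'']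
    rcases hc with ⟨rfl,rfl,rfl⟩|⟨rfl,rfl,rfl⟩|⟨rfl,rfl,rfl⟩|⟨rfl,rfl,rfl⟩|⟨rfl,rfl,rfl⟩|⟨rfl,rfl,rfl⟩|⟨rfl,rfl,rfl⟩|⟨rfl,rfl,rfl⟩|⟨rfl,rfl,rfl⟩|⟨rfl,rfl,rfl⟩ <;> omega
  · rw [vtx2_atM _ _ hm0 _ hm, vtx2_atM _ _ hm0 _ hm', vtx2_atM _ _ hm0 _ hm'']
    rcases hγ with rfl | rfl <;> split_ifs <;> omega

lemma L10 (i i0 iL : Fin d) (hm : 0 < i.val ∧ i.val < d - 1) (h0 : i0.val = 0)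
    (hL : iL.val = d - 1) : a iL + 4 * a i + 5 * ((h:ℤ) - 1) * a i0 ≤ 5 * h := by
  have := hull_bound3Z h 1 4 (5*((h:ℤ)-1)) (5*h) iL i i0 ?_ ha
  · linarith
  rintro v hv
  rcases verts_shape h hd hv with ⟨α, β, γ, hc, rfl⟩ | ⟨i₀, hm0, γ, hγ, rfl⟩
  · rw [vtx_atM _ _ _ _ hm, vtx_atL hd _ _ _ _ hL, vtx_at0 _ _ _ _ h0]
    rcases hc with ⟨rfl,rfl,rfl⟩|⟨rfl,rfl,rfl⟩|⟨rfl,rfl,rfl⟩|⟨rfl,rfl,rfl⟩|⟨rfl,rfl,rfl⟩|⟨rfl,rfl,rfl⟩|⟨rfl,rfl,rfl⟩|⟨rfl,rfl,rfl⟩|⟨rfl,rfl,rfl⟩|⟨rfl,rfl,rfl⟩ <;> omega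
  · rw [vtx2_atM _ _ hm0 _ hm, vtx2_atL _ _ hm0 _ hL, vtx2_at0 _ _ hm0 _ h0]
    rcases hγ with rfl | rfl <;> split_ifs <;> omega

lemma L11 (i i0 iL : Fin d) (hm : 0 < i.val ∧ i.val < d - 1) (h0 : i0.val = 0)
    (hL : iL.val = d - 1) : 4 * a i0 ≤ 4 * a i + a iL := by
  have := hull_bound3Z h (-4) (-1) 4 0 i iL i0 ?_ ha
  · linarith
  rintro v hv
  rcases verts_shape h hd hv with ⟨α, β, γ, hc, rfl⟩ | ⟨i₀, hm0, γ, hγ, rfl⟩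
  · rw [vtx_atM _ _ _ _ hm, vtx_atL hd _ _ _ _ hL, vtx_at0 _ _ _ _ h0]
    rcases hc with ⟨rfl,rfl,rfl⟩|⟨rfl,rfl,rfl⟩|⟨rfl,rfl,rfl⟩|⟨rfl,rfl,rfl⟩|⟨rfl,rfl,rfl⟩|⟨rfl,rfl,rfl⟩|⟨rfl,rfl,rfl⟩|⟨rfl,rfl,rfl⟩|⟨rfl,rfl,rfl⟩|⟨rfl,rfl,rfl⟩ <;> omega
  · rw [vtx2_atM _ _ hm0 _ hm, vtx2_atL _ _ hm0 _ hL, vtx2_at0 _ _ hm0 _ h0]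
    rcases hγ with rfl | rfl <;> split_ifs <;> omega

end AuxStmt8C
section AuxStmt8D
variable {d : ℕ}

lemma eq_vtx_of (hd : 3 ≤ d) (a : Fin d → ℤ) {i0 iL : Fin d} (h0v : i0.val = 0)
    (hLv : iL.val = d - 1) (α β γ : ℤ) (hA : a i0 = α)
    (hB : ∀ i : Fin d, 0 < i.val ∧ i.val < d - 1 → a i = β) (hG : a iL = γ) :
    a = vtx d α β γ := by
  funext i
  by_cases hi0 : i.val = 0
  · rw [vtx_at0 _ _ _ _ hi0]
    have : i = i0 := Fin.ext (by omega)
    rw [this]; exact hA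
  · by_cases hiL : i.val = d - 1
    · rw [vtx_atL hd _ _ _ _ hiL]
      have : i = iL := Fin.ext (by omega)
      rw [this]; exact hG
    · have hi := i.isLt
      have hm : 0 < i.val ∧ i.val < d - 1 := by omega
      rw [vtx_atM _ _ _ _ hm]; exact hB i hm

lemma eq_vtx2_of (hd : 3 ≤ d) (a : Fin d → ℤ) {i0 iL i₀ : Fin d} (h0v : i0.val = 0)
    (hLv : iL.val = d - 1) (hm0 : 0 < i₀.val ∧ i₀.val < d - 1) (γ : ℤ) (hA : a i0 = 0)
    (hB : ∀ i : Fin d, 0 < i.val ∧ i.val < d - 1 → a i = if i.val = i₀.val then 1 else 0)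
    (hG : a iL = γ) : a = vtx2 d i₀ γ := by
  funext i
  by_cases hi0 : i.val = 0
  · rw [vtx2_at0 _ _ hm0 _ hi0]
    have : i = i0 := Fin.ext (by omega)
    rw [this]; exact hA
  · by_cases hiL : i.val = d - 1
    · rw [vtx2_atL _ _ hm0 _ hiL]
      have : i = iL := Fin.ext (by omega)
      rw [this]; exact hG
    · have hi := i.isLt
      have hm : 0 < i.val ∧ i.val < d - 1 := by omega
      rw [vtx2_atM _ _ hm0 _ hm]; exact hB i hm

variable (hd : 3 ≤ d)
include hd

lemma vtxA : vtx d 0 0 0 = (0 : Fin d → ℤ) := by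
  funext i; simp only [vtx, Pi.zero_apply]; split_ifs <;> rfl

lemma vtxB : vtx d 0 0 1 = eD d := by
  funext i; simp only [vtx, eD, eV]; split_ifs <;> omega

lemma vtxC : vtx d 0 1 0 = eMid d := by
  funext i; have := i.isLt; simp only [vtx, eMid]; split_ifs <;> omega

lemma vtxD (h : ℕ) : vtx d 0 h h = (h : ℤ) • (eMid d + eD d) := by
  funext i; have := i.isLt
  simp only [vtx, eMid, eD, eV, Pi.smul_apply, Pi.add_apply, smul_eq_mul]
  split_ifs <;> omega

lemma vtxE (h : ℕ) : vtx d 0 ((h:ℤ)-1) h = ((h:ℤ)-1) • eMid d + (h : ℤ) • eD d := by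
  funext i; have := i.isLt
  simp only [vtx, eMid, eD, eV, Pi.smul_apply, Pi.add_apply, smul_eq_mul]
  split_ifs <;> omega

lemma vtxF (h : ℕ) : vtx d 0 h ((h:ℤ)-1) = (h:ℤ) • eMid d + ((h:ℤ)-1) • eD d := by
  funext i; have := i.isLt
  simp only [vtx, eMid, eD, eV, Pi.smul_apply, Pi.add_apply, smul_eq_mul]
  split_ifs <;> omega

lemma vtxG : vtx d 1 0 4 = eOne d + (4:ℤ) • eD d := by
  funext i; have := i.isLt
  simp only [vtx, eOne, eD, eV, Pi.smul_apply, Pi.add_apply, smul_eq_mul]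
  split_ifs <;> omega

lemma vtxH : vtx d 1 0 5 = eOne d + (5:ℤ) • eD d := by
  funext i; have := i.isLt
  simp only [vtx, eOne, eD, eV, Pi.smul_apply, Pi.add_apply, smul_eq_mul]
  split_ifs <;> omega

lemma vtxI : vtx d 1 1 0 = eOne d + eMid d := by
  funext i; have := i.isLt
  simp only [vtx, eOne, eMid, eV, Pi.add_apply]
  split_ifs <;> omega

lemma vtxJ : vtx d 1 1 1 = eOne d + eMid d + eD d := by
  funext i; have := i.isLt
  simp only [vtx, eOne, eMid, eD, eV, Pi.add_apply]
  split_ifs <;> omega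

lemma vtxU1 (j : ℤ) : vtx d 0 j j = u1j d j := by
  funext i; have := i.isLt
  simp only [vtx, u1j, eMid, eD, eV, Pi.smul_apply, Pi.add_apply, smul_eq_mul]
  split_ifs <;> omega

lemma vtxU2 (j : ℤ) : vtx d 0 j (j+1) = u2j d j := by
  funext i; have := i.isLt
  simp only [vtx, u2j, eMid, eD, eV, Pi.smul_apply, Pi.add_apply, smul_eq_mul]
  split_ifs <;> omega

lemma vtxU3 (j : ℤ) : vtx d 0 (j+1) j = u3j d j := by
  funext i; have := i.isLt
  simp only [vtx, u3j, eMid, eD, eV, Pi.smul_apply, Pi.add_apply, smul_eq_mul]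
  split_ifs <;> omega

omit hd

lemma vtx2E0 (i₀ : Fin d) : vtx2 d i₀ 0 = eV d i₀.val := by
  funext i; simp only [vtx2, eV]; split_ifs <;> omega

lemma vtx2E1 (i₀ : Fin d) : vtx2 d i₀ 1 = eV d i₀.val + eD d := by
  funext i; simp only [vtx2, eV, eD, Pi.add_apply]

end AuxStmt8D
section AuxStmt8E
variable {d : ℕ} (h : ℕ)

lemma mem_Phd_of_vert {a : Fin d → ℤ} (ha : a ∈ PhdVerts h d) : castPt a ∈ Phd h d :=
  subset_convexHull ℝ _ (Set.mem_image_of_mem _ ha)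

lemma seg_mem {x y : Fin d → ℤ} (hx : x ∈ PhdVerts h d) (hy : y ∈ PhdVerts h d)
    (t : ℝ) (ht0 : 0 ≤ t) (ht1 : t ≤ 1) (a : Fin d → ℤ)
    (key : castPt a = (1 - t) • castPt x + t • castPt y) : castPt a ∈ Phd h d := by
  rw [key]
  have hx' : castPt x ∈ convexHull ℝ (castPt '' PhdVerts h d) :=
    subset_convexHull ℝ _ (Set.mem_image_of_mem castPt hx)
  have hy' : castPt y ∈ convexHull ℝ (castPt '' PhdVerts h d) :=
    subset_convexHull ℝ _ (Set.mem_image_of_mem castPt hy)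
  exact (convex_convexHull ℝ _) hx' hy' (by linarith) ht0 (by ring)

variable (hh : 2 ≤ h) (hd : 3 ≤ d)
include hh

lemma u1j_mem (j : ℤ) (h0 : 0 ≤ j) (h1 : j ≤ h) : castPt (u1j d j) ∈ Phd h d := by
  have hhR : (0:ℝ) < (h:ℝ) := by exact_mod_cast (by omega : 0 < h)
  have hjR : (j:ℝ) ≤ (h:ℝ) := by exact_mod_cast h1
  have hj0 : (0:ℝ) ≤ (j:ℝ) := by exact_mod_cast h0
  refine seg_mem h (x := 0) (y := (h:ℤ) • (eMid d + eD d)) ?_ ?_ ((j:ℝ)/(h:ℝ))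
    (by positivity) (by rw [div_le_one hhR]; exact hjR) _ ?_
  · exact Or.inl (by simp only [Set.mem_insert_iff, Set.mem_singleton_iff]; tauto)
  · exact Or.inl (by simp only [Set.mem_insert_iff, Set.mem_singleton_iff]; tauto)
  · funext i
    show ((u1j d j) i : ℝ) = (1 - (j:ℝ)/(h:ℝ)) * ((0:Fin d → ℤ) i : ℝ)
      + (j:ℝ)/(h:ℝ) * (((h:ℤ) • (eMid d + eD d)) i : ℝ)
    simp only [u1j, Pi.smul_apply, Pi.add_apply, smul_eq_mul, Pi.zero_apply]
    push_cast
    field_simp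
    ring

lemma u2j_mem (j : ℤ) (h0 : 0 ≤ j) (h1 : j ≤ (h:ℤ) - 1) : castPt (u2j d j) ∈ Phd h d := by
  have hhR : (0:ℝ) < (h:ℝ) - 1 := by
    have : (1:ℝ) < (h:ℝ) := by exact_mod_cast (by omega : 1 < h)
    linarith
  have hjR : (j:ℝ) ≤ (h:ℝ) - 1 := by
    have : ((j:ℝ)) ≤ (((h:ℤ) - 1 : ℤ) : ℝ) := by exact_mod_cast h1
    push_cast at this; linarith
  have hj0 : (0:ℝ) ≤ (j:ℝ) := by exact_mod_cast h0
  refine seg_mem h (x := eD d) (y := ((h:ℤ)-1) • eMid d + (h:ℤ) • eD d) ?_ ?_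
    ((j:ℝ)/((h:ℝ)-1)) (by positivity) (by rw [div_le_one hhR]; exact hjR) _ ?_
  · exact Or.inl (by simp only [Set.mem_insert_iff, Set.mem_singleton_iff]; tauto)
  · exact Or.inl (by simp only [Set.mem_insert_iff, Set.mem_singleton_iff]; tauto)
  · funext i
    show ((u2j d j) i : ℝ) = (1 - (j:ℝ)/((h:ℝ)-1)) * ((eD d) i : ℝ)
      + (j:ℝ)/((h:ℝ)-1) * ((((h:ℤ)-1) • eMid d + (h:ℤ) • eD d) i : ℝ)
    simp only [u2j, Pi.smul_apply, Pi.add_apply, smul_eq_mul]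
    push_cast
    field_simp
    ring

lemma u3j_mem (j : ℤ) (h0 : 0 ≤ j) (h1 : j ≤ (h:ℤ) - 1) : castPt (u3j d j) ∈ Phd h d := by
  have hhR : (0:ℝ) < (h:ℝ) - 1 := by
    have : (1:ℝ) < (h:ℝ) := by exact_mod_cast (by omega : 1 < h)
    linarith
  have hjR : (j:ℝ) ≤ (h:ℝ) - 1 := by
    have : ((j:ℝ)) ≤ (((h:ℤ) - 1 : ℤ) : ℝ) := by exact_mod_cast h1
    push_cast at this; linarith
  have hj0 : (0:ℝ) ≤ (j:ℝ) := by exact_mod_cast h0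
  refine seg_mem h (x := eMid d) (y := (h:ℤ) • eMid d + ((h:ℤ)-1) • eD d) ?_ ?_
    ((j:ℝ)/((h:ℝ)-1)) (by positivity) (by rw [div_le_one hhR]; exact hjR) _ ?_
  · exact Or.inl (by simp only [Set.mem_insert_iff, Set.mem_singleton_iff]; tauto)
  · exact Or.inl (by simp only [Set.mem_insert_iff, Set.mem_singleton_iff]; tauto)
  · funext i
    show ((u3j d j) i : ℝ) = (1 - (j:ℝ)/((h:ℝ)-1)) * ((eMid d) i : ℝ)
      + (j:ℝ)/((h:ℝ)-1) * (((h:ℤ) • eMid d + ((h:ℤ)-1) • eD d) i : ℝ)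
    simp only [u3j, Pi.smul_apply, Pi.add_apply, smul_eq_mul]
    push_cast
    field_simp
    ring

end AuxStmt8E

theorem stmt_8 (h d : ℕ) (hh : 2 ≤ h) (hd : 3 ≤ d) :
    {a : Fin d → ℤ | castPt a ∈ Phd h d} =
      PhdVerts h d
      ∪ {x | ∃ j : ℤ, 1 ≤ j ∧ j ≤ (h : ℤ) - 2 ∧ (x = u3j d j ∨ x = u2j d j)}
      ∪ {x | ∃ j : ℤ, 1 ≤ j ∧ j ≤ (h : ℤ) - 1 ∧ x = u1j d j} := by
  obtain ⟨i0, h0v⟩ : ∃ i : Fin d, i.val = 0 := ⟨⟨0, by omega⟩, rfl⟩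
  obtain ⟨iL, hLv⟩ : ∃ i : Fin d, i.val = d - 1 := ⟨⟨d - 1, by omega⟩, rfl⟩
  obtain ⟨m1, h1v⟩ : ∃ i : Fin d, i.val = 1 := ⟨⟨1, by omega⟩, rfl⟩
  have hm1 : 0 < m1.val ∧ m1.val < d - 1 := by omega
  ext a
  simp only [Set.mem_setOf_eq, Set.mem_union]
  constructor
  · intro ha
    have nn : ∀ k : Fin d, 0 ≤ a k := fun k => L1 h hh hd ha k
    have hA0le := L2 h hh hd ha i0 h0v
    rcases (by have := nn i0; omega : a i0 = 0 ∨ a i0 = 1) with hA0 | hA0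
    · -- x₀ = 0
      by_cases hall : ∀ i : Fin d, 0 < i.val ∧ i.val < d - 1 → a i = a m1
      · -- all middle coordinates equal
        have hM0 : 0 ≤ a m1 := nn m1
        have hMh : a m1 ≤ (h:ℤ) := by
          have := L3 h hh hd ha m1 i0 hm1 h0v; rw [hA0] at this; omega
        have hZ0 : 0 ≤ a iL := nn iL
        have hZh : a iL ≤ (h:ℤ) := by
          have := L4 h hh hd ha iL i0 hLv h0v; rw [hA0] at this; omega
        have hMZ : a m1 ≤ a iL + 1 := L5 h hh hd ha m1 iL hm1 hLv
        have hZM : a iL ≤ a m1 + 1 := by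
          have := L6 h hh hd ha m1 i0 iL hm1 h0v hLv; rw [hA0] at this; omega
        have hveq : ∀ γ : ℤ, a iL = γ → a = vtx d 0 (a m1) γ := fun γ hγ =>
          eq_vtx_of hd a h0v hLv _ _ _ hA0 hall hγ
        rcases (by omega : a iL = a m1 ∨ a iL = a m1 + 1 ∨ a m1 = a iL + 1) with hc | hc | hc
        · -- z = m
          have heq : a = vtx d 0 (a m1) (a m1) := hveq _ hc
          rcases (by omega : a m1 = 0 ∨ a m1 = (h:ℤ) ∨ (1 ≤ a m1 ∧ a m1 ≤ (h:ℤ) - 1))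
            with hm | hm | hm
          · refine Or.inl (Or.inl (Or.inl ?_))
            rw [heq, hm, vtxA hd]
            simp only [Set.mem_insert_iff, Set.mem_singleton_iff]; tauto
          · refine Or.inl (Or.inl (Or.inl ?_))
            rw [heq, hm, vtxD hd h]
            simp only [Set.mem_insert_iff, Set.mem_singleton_iff]; tauto
          · exact Or.inr ⟨a m1, hm.1, hm.2, heq.trans (vtxU1 hd _)⟩
        · -- z = m + 1
          have heq : a = vtx d 0 (a m1) (a m1 + 1) := hveq _ hc
          rcases (by omega : a m1 = 0 ∨ a m1 = (h:ℤ) - 1 ∨ (1 ≤ a m1 ∧ a m1 ≤ (h:ℤ) - 2))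
            with hm | hm | hm
          · refine Or.inl (Or.inl (Or.inl ?_))
            rw [heq, hm, show (0:ℤ) + 1 = 1 by ring, vtxB hd]
            simp only [Set.mem_insert_iff, Set.mem_singleton_iff]; tauto
          · refine Or.inl (Or.inl (Or.inl ?_))
            rw [heq, hm, show ((h:ℤ) - 1) + 1 = (h:ℤ) by ring, vtxE hd h]
            simp only [Set.mem_insert_iff, Set.mem_singleton_iff]; tauto
          · exact Or.inl (Or.inr ⟨a m1, hm.1, hm.2, Or.inr (heq.trans (vtxU2 hd _))⟩)
        · -- m = z + 1
          have heq : a = vtx d 0 (a iL + 1) (a iL) := by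
            have := hveq (a iL) rfl; rw [hc] at this; exact this
          rcases (by omega : a iL = 0 ∨ a iL = (h:ℤ) - 1 ∨ (1 ≤ a iL ∧ a iL ≤ (h:ℤ) - 2))
            with hz | hz | hz
          · refine Or.inl (Or.inl (Or.inl ?_))
            rw [heq, hz, show (0:ℤ) + 1 = 1 by ring, vtxC hd]
            simp only [Set.mem_insert_iff, Set.mem_singleton_iff]; tauto
          · refine Or.inl (Or.inl (Or.inl ?_))
            rw [heq, hz, show ((h:ℤ) - 1) + 1 = (h:ℤ) by ring, vtxF hd h]
            simp only [Set.mem_insert_iff, Set.mem_singleton_iff]; tauto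
          · exact Or.inl (Or.inr ⟨a iL, hz.1, hz.2, Or.inl (heq.trans (vtxU3 hd _))⟩)
      · -- mixed middle coordinates
        push_neg at hall
        obtain ⟨i, hi, hne⟩ := hall
        have d1 := L7 h hh hd ha i m1 i0 hi hm1 h0v
        have d2 := L7 h hh hd ha m1 i i0 hm1 hi h0v
        rw [hA0] at d1 d2
        have key : ∃ ib : Fin d, (0 < ib.val ∧ ib.val < d - 1) ∧ ∃ γ : ℤ,
            (γ = 0 ∨ γ = 1) ∧ a = vtx2 d ib γ := by
          have main : ∀ ib is : Fin d, (0 < ib.val ∧ ib.val < d - 1) →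
              (0 < is.val ∧ is.val < d - 1) → a ib = a is + 1 →
              ∃ ib : Fin d, (0 < ib.val ∧ ib.val < d - 1) ∧ ∃ γ : ℤ,
                (γ = 0 ∨ γ = 1) ∧ a = vtx2 d ib γ := by
            intro ib is hib his hbig
            have h8 := L8 h hh hd ha ib is hib his
            rw [hbig] at h8
            have his0 : a is = 0 := by
              have hle : a is ≤ 0 := by nlinarith
              have := nn is; omega
            have hib1 : a ib = 1 := by omega
            have hmidvals : ∀ k : Fin d, 0 < k.val ∧ k.val < d - 1 →
                a k = if k.val = ib.val then 1 else 0 := by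
              intro k hk
              by_cases hkib : k.val = ib.val
              · rw [if_pos hkib, show k = ib from Fin.ext hkib]; exact hib1
              · rw [if_neg hkib]
                have hk1 : a k ≤ 1 := by
                  have := L7 h hh hd ha k is i0 hk his h0v; rw [hA0] at this; omega
                have hk0 : 0 ≤ a k := nn k
                rcases (by omega : a k = 0 ∨ a k = 1) with h' | h'
                · exact h'
                · exfalso
                  have h9 := L9 h hh hd ha k ib is hk hib his hkib
                  omega
            have hZ1 : a iL ≤ 1 := by
              have := L6 h hh hd ha is i0 iL his h0v hLv
              rw [hA0, his0] at this; omega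
            have hZ0 : 0 ≤ a iL := nn iL
            exact ⟨ib, hib, a iL, by omega,
              eq_vtx2_of hd a h0v hLv hib _ hA0 hmidvals rfl⟩
          rcases (by omega : a i = a m1 + 1 ∨ a m1 = a i + 1) with hbig | hbig
          · exact main i m1 hi hm1 hbig
          · exact main m1 i hm1 hi hbig
        obtain ⟨ib, hib, γ, hγ, heq⟩ := key
        refine Or.inl (Or.inl (Or.inr ⟨ib, hib.1, hib.2, ?_⟩))
        rcases hγ with rfl | rfl
        · exact Or.inl (heq.trans (vtx2E0 ib))
        · exact Or.inr (heq.trans (vtx2E1 ib))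
    · -- x₀ = 1
      have hall : ∀ i : Fin d, 0 < i.val ∧ i.val < d - 1 → a i = a m1 := by
        intro i hi
        have d1 := L7 h hh hd ha i m1 i0 hi hm1 h0v
        have d2 := L7 h hh hd ha m1 i i0 hm1 hi h0v
        rw [hA0] at d1 d2; omega
      have hM0 : 0 ≤ a m1 := nn m1
      have hM1 : a m1 ≤ 1 := by
        have := L3 h hh hd ha m1 i0 hm1 h0v; rw [hA0] at this
        have hcast : ((h:ℤ) - 1) * 1 = (h:ℤ) - 1 := by ring
        rw [hcast] at this; omega
      have h10 := L10 h hh hd ha m1 i0 iL hm1 h0v hLv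
      have h11 := L11 h hh hd ha m1 i0 iL hm1 h0v hLv
      rw [hA0] at h10 h11
      rw [show 5 * ((h:ℤ) - 1) * 1 = 5 * (h:ℤ) - 5 by ring] at h10
      rw [show (4:ℤ) * 1 = 4 by ring] at h11
      have hZ0 : 0 ≤ a iL := nn iL
      have hveq : ∀ γ : ℤ, a iL = γ → a = vtx d 1 (a m1) γ := fun γ hγ =>
        eq_vtx_of hd a h0v hLv _ _ _ hA0 hall hγ
      refine Or.inl (Or.inl (Or.inl ?_))
      rcases (by omega : (a m1 = 0 ∧ (a iL = 4 ∨ a iL = 5)) ∨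
          (a m1 = 1 ∧ (a iL = 0 ∨ a iL = 1))) with ⟨hm, hz | hz⟩ | ⟨hm, hz | hz⟩
      · rw [hveq _ hz, hm, vtxG hd]
        simp only [Set.mem_insert_iff, Set.mem_singleton_iff]; tauto
      · rw [hveq _ hz, hm, vtxH hd]
        simp only [Set.mem_insert_iff, Set.mem_singleton_iff]; tauto
      · rw [hveq _ hz, hm, vtxI hd]
        simp only [Set.mem_insert_iff, Set.mem_singleton_iff]; tauto
      · rw [hveq _ hz, hm, vtxJ hd]
        simp only [Set.mem_insert_iff, Set.mem_singleton_iff]; tauto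
  · rintro ((hv | ⟨j, hj1, hj2, hu | hu⟩) | ⟨j, hj1, hj2, hu⟩)
    · exact mem_Phd_of_vert h hv
    · rw [hu]; exact u3j_mem h hh j (by omega) (by omega)
    · rw [hu]; exact u2j_mem h hh j (by omega) (by omega)
    · rw [hu]; exact u1j_mem h hh j (by omega) (by omega)
end AuxStmt8B
end
end

section
/- Let h ≥ 1 and d ≥ 3. The polytope P_{h,d} equals the intersection of the closed half-spaces given by: x_1 ≥ 0; x_d ≥ 0; x_i ≥ 0 for 2 ≤ i ≤ d-1; and, for each i with 2 ≤ i ≤ d-1: -(d-4)x_i + Σ_{j≠i} x_j - x_d ≤ 1; 4x_1 - 4x_i - x_d ≤ 0; -4x_1 - x_i + x_d ≤ 1; x_1 - (d-3)x_i + Σ_{j≠i} x_j ≤ 1; (5h-5)x_1 - ((d-3)(5h-1)-4)x_i + (5h-1)Σ_{j≠i} x_j + x_d ≤ 5h; (h-5)x_1 - (d-3)(h-1)x_i + (h-1)Σ_{j≠i} x_j + x_d ≤ h; (h-1)x_1 - ((d-3)h-1)x_i + hΣ_{j≠i} x_j ≤ h, where the sums Σ_{j≠i} range over 2 ≤ j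 ≤ d-1, j ≠ i; that is, P_{h,d} = H_0^{(-)} ∩ H_1^{(-)} ∩ ⋂ H_{j,i}^{(+)}, where H_0 : x_1 = 0 and H_1 : x_d = 0 give x_1 ≥ 0 and x_d ≥ 0, and the half-spaces H_{j,i}^{(+)} give the remaining inequalities above. -/
set_option maxHeartbeats 1000000


open Finset

noncomputable section

/-- `Σ_{2 ≤ j ≤ d-1} x_j`, the sum over the middle coordinates. -/
def midSum {d : ℕ} (x : Fin d → ℝ) : ℝ :=
  ∑ j ∈ Finset.univ.filter (fun j : Fin d => 0 < j.val ∧ j.val < d - 1), x j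

-- ### auxiliary
def midF (d : ℕ) : Finset (Fin d) := Finset.univ.filter (fun j : Fin d => 0 < j.val ∧ j.val < d - 1)

lemma mem_midF {d : ℕ} {j : Fin d} : j ∈ midF d ↔ 0 < j.val ∧ j.val < d - 1 := by
  simp [midF]

lemma midSum_eq {d : ℕ} (x : Fin d → ℝ) : midSum x = ∑ j ∈ midF d, x j := rfl

lemma card_midF {d : ℕ} (hd : 3 ≤ d) : (midF d).card = d - 2 := by
  have h0 : (0:ℕ) < d := by omega
  have hlast : d - 1 < d := by omega
  have hcompl : (midF d)ᶜ = ({⟨0, h0⟩, ⟨d-1, hlast⟩} : Finset (Fin d)) := by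
    ext j
    simp only [Finset.mem_compl, mem_midF, Finset.mem_insert, Finset.mem_singleton, Fin.ext_iff]
    omega
  have hc2 : (midF d)ᶜ.card = 2 := by
    rw [hcompl]
    rw [Finset.card_insert_of_notMem (by simp [Fin.ext_iff]; omega), Finset.card_singleton]
  have := Finset.card_compl (midF d)
  have hle := Finset.card_le_univ (midF d)
  simp [Fintype.card_fin] at this hle
  omega

/-- canonical H-representation set -/
def Hset (h d : ℕ) (hd : 3 ≤ d) : Set (Fin d → ℝ) := {x : Fin d → ℝ |
      0 ≤ x ⟨0, by omega⟩ ∧ 0 ≤ x ⟨d - 1, by omega⟩ ∧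
      ∀ i : Fin d, 0 < i.val → i.val < d - 1 →
        0 ≤ x i ∧
        -((d : ℝ) - 4) * x i + (midSum x - x i) - x ⟨d - 1, by omega⟩ ≤ 1 ∧
        4 * x ⟨0, by omega⟩ - 4 * x i - x ⟨d - 1, by omega⟩ ≤ 0 ∧
        -4 * x ⟨0, by omega⟩ - x i + x ⟨d - 1, by omega⟩ ≤ 1 ∧
        x ⟨0, by omega⟩ - ((d : ℝ) - 3) * x i + (midSum x - x i) ≤ 1 ∧
        (5 * (h : ℝ) - 5) * x ⟨0, by omega⟩ - (((d : ℝ) - 3) * (5 * (h : ℝ) - 1) - 4) * x i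
          + (5 * (h : ℝ) - 1) * (midSum x - x i) + x ⟨d - 1, by omega⟩ ≤ 5 * (h : ℝ) ∧
        ((h : ℝ) - 5) * x ⟨0, by omega⟩ - ((d : ℝ) - 3) * ((h : ℝ) - 1) * x i
          + ((h : ℝ) - 1) * (midSum x - x i) + x ⟨d - 1, by omega⟩ ≤ (h : ℝ) ∧
        ((h : ℝ) - 1) * x ⟨0, by omega⟩ - (((d : ℝ) - 3) * (h : ℝ) - 1) * x i
          + (h : ℝ) * (midSum x - x i) ≤ (h : ℝ)}

lemma convex_Hset (h d : ℕ) (hd : 3 ≤ d) : Convex ℝ (Hset h d hd) := by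
  intro p hp q hq α β hα hβ hαβ
  have hβeq : β = 1 - α := by linarith
  subst hβeq
  obtain ⟨hp0, hpd, hpm⟩ := hp
  obtain ⟨hq0, hqd, hqm⟩ := hq
  have hms : midSum (α • p + (1-α) • q) = α * midSum p + (1-α) * midSum q := by
    simp only [midSum, Pi.add_apply, Pi.smul_apply, smul_eq_mul, Finset.mul_sum]
    rw [← Finset.sum_add_distrib]
  refine ⟨?_, ?_, fun i h1 h2 => ?_⟩
  · have := add_le_add (mul_le_mul_of_nonneg_left hp0 hα) (mul_le_mul_of_nonneg_left hq0 hβ)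
    simpa using this
  · have := add_le_add (mul_le_mul_of_nonneg_left hpd hα) (mul_le_mul_of_nonneg_left hqd hβ)
    simpa using this
  · obtain ⟨P0, P1, P2, P3, P4, P5, P6, P7⟩ := hpm i h1 h2
    obtain ⟨Q0, Q1, Q2, Q3, Q4, Q5, Q6, Q7⟩ := hqm i h1 h2
    simp only [Pi.add_apply, Pi.smul_apply, smul_eq_mul, hms]
    refine ⟨?_, ?_, ?_, ?_, ?_, ?_, ?_, ?_⟩
    · linarith [mul_le_mul_of_nonneg_left P0 hα, mul_le_mul_of_nonneg_left Q0 hβ]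
    · linarith [mul_le_mul_of_nonneg_left P1 hα, mul_le_mul_of_nonneg_left Q1 hβ]
    · linarith [mul_le_mul_of_nonneg_left P2 hα, mul_le_mul_of_nonneg_left Q2 hβ]
    · linarith [mul_le_mul_of_nonneg_left P3 hα, mul_le_mul_of_nonneg_left Q3 hβ]
    · linarith [mul_le_mul_of_nonneg_left P4 hα, mul_le_mul_of_nonneg_left Q4 hβ]
    · linarith [mul_le_mul_of_nonneg_left P5 hα, mul_le_mul_of_nonneg_left Q5 hβ]
    · linarith [mul_le_mul_of_nonneg_left P6 hα, mul_le_mul_of_nonneg_left Q6 hβ]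
    · linarith [mul_le_mul_of_nonneg_left P7 hα, mul_le_mul_of_nonneg_left Q7 hβ]

lemma symm_mem (h d : ℕ) (hh : 1 ≤ h) (hd : 3 ≤ d) (A σ Y : ℝ) (x : Fin d → ℝ)
    (hx0 : ∀ p : 0 < d, x ⟨0, p⟩ = A) (hxd : ∀ p : d - 1 < d, x ⟨d-1, p⟩ = Y)
    (hmid : ∀ j : Fin d, 0 < j.val → j.val < d - 1 → x j = σ)
    (hA0 : 0 ≤ A) (hσ0 : 0 ≤ σ) (hY0 : 0 ≤ Y)
    (k1 : σ - Y ≤ 1) (k2 : 4*A - 4*σ - Y ≤ 0) (k3 : -4*A - σ + Y ≤ 1) (k4 : A ≤ 1)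
    (k5 : (5*(h:ℝ)-5)*A + 4*σ + Y ≤ 5*(h:ℝ)) (k6 : ((h:ℝ)-5)*A + Y ≤ (h:ℝ))
    (k7 : ((h:ℝ)-1)*A + σ ≤ (h:ℝ)) :
    x ∈ Hset h d hd := by
  have hD : (3:ℝ) ≤ (d:ℝ) := by exact_mod_cast hd
  have hms : midSum x = ((d:ℝ) - 2) * σ := by
    rw [midSum_eq]
    rw [Finset.sum_congr rfl (fun j hj => hmid j (mem_midF.mp hj).1 (mem_midF.mp hj).2)]
    rw [Finset.sum_const, card_midF hd, nsmul_eq_mul]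
    rw [Nat.cast_sub (by omega : 2 ≤ d)]
    norm_num
  refine ⟨by rw [hx0]; exact hA0, by rw [hxd]; exact hY0, fun i h1 h2 => ?_⟩
  rw [hms]
  rw [hmid i h1 h2, hx0, hxd]
  refine ⟨hσ0, by linarith, by linarith, by linarith, by linarith, by linarith, by linarith,
    by linarith⟩

lemma unit_mem (h d : ℕ) (hh : 1 ≤ h) (hd : 3 ≤ d) (i0 : Fin d) (hi1 : 0 < i0.val)
    (hi2 : i0.val < d - 1) (Y : ℝ) (hY0 : 0 ≤ Y) (hY1 : Y ≤ 1) (x : Fin d → ℝ)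
    (hx0 : ∀ p : 0 < d, x ⟨0, p⟩ = 0) (hxd : ∀ p : d - 1 < d, x ⟨d-1, p⟩ = Y)
    (hmid : ∀ j : Fin d, 0 < j.val → j.val < d - 1 → x j = if j = i0 then 1 else 0) :
    x ∈ Hset h d hd := by
  have hD : (3:ℝ) ≤ (d:ℝ) := by exact_mod_cast hd
  have hH : (1:ℝ) ≤ (h:ℝ) := by exact_mod_cast hh
  have hms : midSum x = 1 := by
    rw [midSum_eq, Finset.sum_congr rfl (fun j hj => hmid j (mem_midF.mp hj).1 (mem_midF.mp hj).2)]
    rw [Finset.sum_ite_eq' (midF d) i0 (fun _ => (1:ℝ))]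
    simp [mem_midF, hi1, hi2]
  refine ⟨by rw [hx0], by rw [hxd]; exact hY0, fun i h1 h2 => ?_⟩
  rw [hms, hmid i h1 h2, hx0, hxd]
  by_cases hii : i = i0
  · rw [if_pos hii]
    refine ⟨by norm_num, by linarith, by linarith, by linarith, by linarith, ?_, ?_, ?_⟩
    · nlinarith [mul_nonneg (by linarith : (0:ℝ) ≤ (d:ℝ)-3) (by linarith : (0:ℝ) ≤ 5*(h:ℝ)-1)]
    · nlinarith [mul_nonneg (by linarith : (0:ℝ) ≤ (d:ℝ)-3) (by linarith : (0:ℝ) ≤ (h:ℝ)-1)]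
    · nlinarith [mul_nonneg (by linarith : (0:ℝ) ≤ (d:ℝ)-3) (by linarith : (0:ℝ) ≤ (h:ℝ))]
  · rw [if_neg hii]
    refine ⟨le_refl _, by linarith, by linarith, by linarith, by linarith, by linarith,
      by linarith, by linarith⟩

lemma hull_sub (h d : ℕ) (hh : 1 ≤ h) (hd : 3 ≤ d) : Phd h d ⊆ Hset h d hd := by
  have hD : (3:ℝ) ≤ (d:ℝ) := by exact_mod_cast hd
  have hH : (1:ℝ) ≤ (h:ℝ) := by exact_mod_cast hh
  apply convexHull_min ?_ (convex_Hset h d hd)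
  rintro _ ⟨v, hv, rfl⟩
  have c1 : ¬ ((0:ℕ) = d - 1) := by omega
  have c2 : ∀ j : Fin d, 0 < j.val → j.val < d - 1 → ¬ (j.val = d - 1) := by omega
  have c1' : ¬ (d - 1 = 0) := by omega
  have c3 : ∀ j : Fin d, 0 < j.val → j.val < d - 1 → ¬ (j.val = 0) := by omega
  rcases hv with hv | ⟨i0, hi1, hi2, hv | hv⟩
  · simp only [Set.mem_insert_iff, Set.mem_singleton_iff] at hv
    rcases hv with rfl|rfl|rfl|rfl|rfl|rfl|rfl|rfl|rfl|rfl
    · exact symm_mem h d hh hd 0 0 0 _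
        (fun p => by simp [castPt]) (fun p => by simp [castPt])
        (fun j h1 h2 => by simp [castPt])
        le_rfl le_rfl le_rfl (by norm_num) (by norm_num) (by norm_num) (by norm_num)
        (by linarith) (by linarith) (by linarith)
    · exact symm_mem h d hh hd 0 0 1 _
        (fun p => by simp [castPt, eD, eV, c1]) (fun p => by simp [castPt, eD, eV])
        (fun j h1 h2 => by simp [castPt, eD, eV, c2 j h1 h2])
        le_rfl le_rfl (by norm_num) (by norm_num) (by norm_num) (by norm_num) (by norm_num)
        (by linarith) (by linarith) (by linarith)
    · exact symm_mem h d hh hd 0 1 0 _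
        (fun p => by simp [castPt, eMid]) (fun p => by simp [castPt, eMid])
        (fun j h1 h2 => by simp [castPt, eMid, h1, h2])
        le_rfl (by norm_num) le_rfl (by norm_num) (by norm_num) (by norm_num) (by norm_num)
        (by linarith) (by linarith) (by linarith)
    · exact symm_mem h d hh hd 0 (h:ℝ) (h:ℝ) _
        (fun p => by simp [castPt, eMid, eD, eV, c1]) (fun p => by simp [castPt, eMid, eD, eV])
        (fun j h1 h2 => by simp [castPt, eMid, eD, eV, h1, h2, c2 j h1 h2])
        le_rfl (by linarith) (by linarith) (by linarith) (by linarith) (by linarith)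
        (by linarith) (by linarith) (by linarith) (by linarith)
    · exact symm_mem h d hh hd 0 ((h:ℝ)-1) (h:ℝ) _
        (fun p => by simp [castPt, eMid, eD, eV, c1]) (fun p => by simp [castPt, eMid, eD, eV])
        (fun j h1 h2 => by simp [castPt, eMid, eD, eV, h1, h2, c2 j h1 h2])
        le_rfl (by linarith) (by linarith) (by linarith) (by linarith) (by linarith)
        (by linarith) (by linarith) (by linarith) (by linarith)
    · exact symm_mem h d hh hd 0 (h:ℝ) ((h:ℝ)-1) _
        (fun p => by simp [castPt, eMid, eD, eV, c1]) (fun p => by simp [castPt, eMid, eD, eV])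
        (fun j h1 h2 => by simp [castPt, eMid, eD, eV, h1, h2, c2 j h1 h2])
        le_rfl (by linarith) (by linarith) (by linarith) (by linarith) (by linarith)
        (by linarith) (by linarith) (by linarith) (by linarith)
    · exact symm_mem h d hh hd 1 0 4 _
        (fun p => by simp [castPt, eOne, eD, eV, c1]) (fun p => by simp [castPt, eOne, eD, eV, c1'])
        (fun j h1 h2 => by simp [castPt, eOne, eD, eV, c2 j h1 h2, c3 j h1 h2])
        (by norm_num) le_rfl (by norm_num) (by norm_num) (by norm_num) (by norm_num)
        (by norm_num) (by linarith) (by linarith) (by linarith)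
    · exact symm_mem h d hh hd 1 0 5 _
        (fun p => by simp [castPt, eOne, eD, eV, c1]) (fun p => by simp [castPt, eOne, eD, eV, c1'])
        (fun j h1 h2 => by simp [castPt, eOne, eD, eV, c2 j h1 h2, c3 j h1 h2])
        (by norm_num) le_rfl (by norm_num) (by norm_num) (by norm_num) (by norm_num)
        (by norm_num) (by linarith) (by linarith) (by linarith)
    · exact symm_mem h d hh hd 1 1 0 _
        (fun p => by simp [castPt, eOne, eMid, eV, c1]) (fun p => by simp [castPt, eOne, eMid, eV, c1'])
        (fun j h1 h2 => by simp [castPt, eOne, eMid, eV, h1, h2, c3 j h1 h2])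
        (by norm_num) (by norm_num) le_rfl (by norm_num) (by norm_num) (by norm_num)
        (by norm_num) (by linarith) (by linarith) (by linarith)
    · exact symm_mem h d hh hd 1 1 1 _
        (fun p => by simp [castPt, eOne, eMid, eD, eV, c1]) (fun p => by simp [castPt, eOne, eMid, eD, eV, c1'])
        (fun j h1 h2 => by simp [castPt, eOne, eMid, eD, eV, h1, h2, c2 j h1 h2, c3 j h1 h2])
        (by norm_num) (by norm_num) (by norm_num) (by norm_num) (by norm_num) (by norm_num)
        (by norm_num) (by linarith) (by linarith) (by linarith)
  · subst hv
    have cne0 : ¬ ((0:ℕ) = i0.val) := by omega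
    have cned : ¬ (d - 1 = i0.val) := by omega
    exact unit_mem h d hh hd i0 hi1 hi2 0 le_rfl (by norm_num) _
      (fun p => by simp [castPt, eV, cne0]) (fun p => by simp [castPt, eV, cned])
      (fun j h1 h2 => by
        simp only [castPt, eV]
        simp only [Fin.val_inj]
        split_ifs <;> simp)
  · subst hv
    have cne0 : ¬ ((0:ℕ) = i0.val) := by omega
    have cned : ¬ (d - 1 = i0.val) := by omega
    exact unit_mem h d hh hd i0 hi1 hi2 1 zero_le_one le_rfl _
      (fun p => by simp [castPt, eV, eD, cne0, c1]) (fun p => by simp [castPt, eV, eD, cned])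
      (fun j h1 h2 => by
        simp only [castPt, eV, eD, Pi.add_apply]
        simp only [Fin.val_inj]
        have := c2 j h1 h2
        split_ifs <;> simp_all)


lemma exists_a1w (H a τ B0 y : ℝ) (hH : 1 ≤ H) (ha : 0 ≤ a) (hτ : 0 ≤ τ) (hB0 : 0 ≤ B0) (hy : 0 ≤ y)
    (c1 : B0 + τ ≤ 1 + y) (c2 : 4*a ≤ 4*τ + y) (c3 : y ≤ 1 + 4*a + τ)
    (c4 : a + B0 ≤ 1)
    (c5 : (5*H-5)*a + (5*H-1)*B0 + 4*τ + y ≤ 5*H)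
    (c6 : (H-5)*a + (H-1)*B0 + y ≤ H)
    (c7 : (H-1)*a + H*B0 + τ ≤ H) :
    ∃ a1 w : ℝ, 0 ≤ a1 ∧ a1 ≤ a ∧ a1 ≤ τ ∧
      0 ≤ w ∧ y - 5*(a-a1) - a1 - B0 ≤ w ∧ w ≤ y - 4*(a-a1) ∧
      (τ - a1) - w ≤ 1 - a - B0 ∧ w - (τ - a1) ≤ 1 - a - B0 ∧
      (τ - a1) ≤ H*(1 - a - B0) ∧ w ≤ H*(1 - a - B0) := by
  set r : ℝ := 1 - a - B0 with hr
  have hr0 : 0 ≤ r := by simp [hr]; linarith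
  have hHr : 0 ≤ H * r := mul_nonneg (by linarith) hr0
  set L1 : ℝ := (τ + 4*a - y - r)/5
  set L4 : ℝ := a - y/4
  set L5 : ℝ := τ - H*r
  set a1 : ℝ := max 0 (max L1 (max L4 L5)) with ha1def
  have hU2 : ∀ z : ℝ, z = 0 ∨ z = L1 ∨ z = L4 ∨ z = L5 → 5*z ≤ τ + r + B0 + 5*a - y := by
    rintro z (rfl|rfl|rfl|rfl)
    · linarith
    · simp only [L1]; linarith
    · simp only [L4]; linarith
    · simp only [L5]; nlinarith [mul_nonneg (sub_nonneg.mpr hH) hr0]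
  have hU3 : ∀ z : ℝ, z = 0 ∨ z = L1 ∨ z = L4 ∨ z = L5 → 4*z ≤ H*r + B0 + 5*a - y := by
    rintro z (rfl|rfl|rfl|rfl)
    · nlinarith
    · simp only [L1]; nlinarith
    · simp only [L4]; nlinarith
    · simp only [L5]; nlinarith
  have hLa : ∀ z : ℝ, z = 0 ∨ z = L1 ∨ z = L4 ∨ z = L5 → z ≤ a := by
    rintro z (rfl|rfl|rfl|rfl)
    · exact ha
    · simp only [L1]; linarith
    · simp only [L4]; linarith
    · simp only [L5]; nlinarith
  have hLτ : ∀ z : ℝ, z = 0 ∨ z = L1 ∨ z = L4 ∨ z = L5 → z ≤ τ := by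
    rintro z (rfl|rfl|rfl|rfl)
    · exact hτ
    · simp only [L1]; linarith
    · simp only [L4]; linarith
    · simp only [L5]; linarith
  have ha10 : 0 ≤ a1 := le_max_left _ _
  have ha1a : a1 ≤ a := by
    simp only [ha1def, max_le_iff]
    exact ⟨hLa 0 (by tauto), hLa L1 (by tauto), hLa L4 (by tauto), hLa L5 (by tauto)⟩
  have ha1τ : a1 ≤ τ := by
    simp only [ha1def, max_le_iff]
    exact ⟨hLτ 0 (by tauto), hLτ L1 (by tauto), hLτ L4 (by tauto), hLτ L5 (by tauto)⟩
  have ha1U2 : 5*a1 ≤ τ + r + B0 + 5*a - y := by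
    simp only [ha1def]
    rcases max_cases 0 (max L1 (max L4 L5)) with ⟨he, _⟩ | ⟨he, _⟩ <;> rw [he]
    · linarith
    · rcases max_cases L1 (max L4 L5) with ⟨he2, _⟩ | ⟨he2, _⟩ <;> rw [he2]
      · exact hU2 L1 (by tauto)
      · rcases max_cases L4 L5 with ⟨he3, _⟩ | ⟨he3, _⟩ <;> rw [he3]
        · exact hU2 L4 (by tauto)
        · exact hU2 L5 (by tauto)
  have ha1U3 : 4*a1 ≤ H*r + B0 + 5*a - y := by
    simp only [ha1def]
    rcases max_cases 0 (max L1 (max L4 L5)) with ⟨he, _⟩ | ⟨he, _⟩ <;> rw [he]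
    · exact hU3 0 (by tauto)
    · rcases max_cases L1 (max L4 L5) with ⟨he2, _⟩ | ⟨he2, _⟩ <;> rw [he2]
      · exact hU3 L1 (by tauto)
      · rcases max_cases L4 L5 with ⟨he3, _⟩ | ⟨he3, _⟩ <;> rw [he3]
        · exact hU3 L4 (by tauto)
        · exact hU3 L5 (by tauto)
  have hF1 : y - 4*(a - a1) ≥ (τ - a1) - r := by
    have : L1 ≤ a1 := le_trans (le_max_left _ _) (le_max_right _ _)
    simp only [L1] at this; linarith
  have hF4 : 0 ≤ y - 4*(a - a1) := by
    have : L4 ≤ a1 := le_trans (le_trans (le_max_left _ _) (le_max_right _ _)) (le_max_right _ _)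
    simp only [L4] at this; linarith
  have hF5 : τ - a1 ≤ H*r := by
    have : L5 ≤ a1 := le_trans (le_trans (le_max_right _ _) (le_max_right _ _)) (le_max_right _ _)
    simp only [L5] at this; linarith
  set w : ℝ := max (y - 5*(a-a1) - a1 - B0) (max 0 ((τ - a1) - r)) with hwdef
  have hwmin : y - 5*(a-a1) - a1 - B0 ≤ w := le_max_left _ _
  have hw0 : 0 ≤ w := le_trans (le_max_left _ _) (le_max_right _ _)
  have hwur : (τ - a1) - r ≤ w := le_trans (le_max_right _ _) (le_max_right _ _)
  have hwmax : w ≤ y - 4*(a-a1) := by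
    simp only [hwdef, max_le_iff]
    refine ⟨by linarith, hF4, by linarith⟩
  have hwu : w - (τ - a1) ≤ r := by
    have h2 : w ≤ (τ - a1) + r := by
      simp only [hwdef, max_le_iff]
      refine ⟨by linarith, by linarith, by linarith⟩
    linarith
  have hwh : w ≤ H*r := by
    simp only [hwdef, max_le_iff]
    refine ⟨by linarith, hHr, by linarith⟩
  exact ⟨a1, w, ha10, ha1a, ha1τ, hw0, hwmin, hwmax, by linarith, hwu, hF5, hwh⟩

lemma symRep (H u w r : ℝ) (hH : 1 ≤ H) (hu : 0 ≤ u) (hw : 0 ≤ w) (hr : 0 ≤ r)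
    (huw : u - w ≤ r) (hwu : w - u ≤ r) (huh : u ≤ H*r) (hwh : w ≤ H*r) :
    ∃ lB lC lD lE lF : ℝ, 0 ≤ lB ∧ 0 ≤ lC ∧ 0 ≤ lD ∧ 0 ≤ lE ∧ 0 ≤ lF ∧
      lC + H*lD + (H-1)*lE + H*lF = u ∧
      lB + H*lD + H*lE + (H-1)*lF = w ∧
      lB + lC + lD + lE + lF ≤ r := by
  have hH0 : (0:ℝ) < H := by linarith
  rcases le_or_gt (H*w) ((H-1)*u) with hb | hb
  · -- branch 1 : C + F
    rcases eq_or_lt_of_le hH with hH1 | hH1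
    · have hw0 : w = 0 := by nlinarith
      exact ⟨0, u, 0, 0, 0, le_refl _, hu, le_refl _, le_refl _, le_refl _, by ring,
        by rw [hw0]; ring, by linarith⟩
    · have hH1' : (0:ℝ) < H - 1 := by linarith
      have e2 : (H-1)*(w/(H-1)) = w := by field_simp
      have e3 : H*w/(H-1) ≤ u := by rw [div_le_iff₀ hH1']; nlinarith
      have e6 : H*w/(H-1) = w + w/(H-1) := by field_simp; ring
      refine ⟨0, u - H*w/(H-1), 0, 0, w/(H-1), le_refl _, by linarith, le_refl _, le_refl _,
        div_nonneg hw (le_of_lt hH1'), by ring, by linarith [e2], by linarith [e6, huw]⟩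
  · rcases le_or_gt w u with hb2 | hb2
    · -- branch 2: F + D
      have e1 : H*((H*w - (H-1)*u)/H) = H*w - (H-1)*u := by field_simp
      refine ⟨0, 0, (H*w - (H-1)*u)/H, 0, u - w, le_refl _, le_refl _,
        div_nonneg (by nlinarith) (le_of_lt hH0), le_refl _, by linarith,
        by linarith [e1], by linarith [e1], ?_⟩
      have e4 : (H*w - (H-1)*u)/H + (u - w) = u/H := by field_simp; ring
      have e5 : u/H ≤ r := by rw [div_le_iff₀ hH0]; nlinarith
      linarith [e4, e5]
    · rcases le_or_gt ((H-1)*w) (H*u) with hb3 | hb3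
      · -- branch 3: E + D
        have e1 : H*((H*u - (H-1)*w)/H) = H*u - (H-1)*w := by field_simp
        refine ⟨0, 0, (H*u - (H-1)*w)/H, w - u, 0, le_refl _, le_refl _,
          div_nonneg (by nlinarith) (le_of_lt hH0), by linarith, le_refl _,
          by linarith [e1], by linarith [e1], ?_⟩
        have e4 : (H*u - (H-1)*w)/H + (w - u) = w/H := by field_simp; ring
        have e5 : w/H ≤ r := by rw [div_le_iff₀ hH0]; nlinarith
        linarith [e4, e5]
      · -- branch 4: B + E
        rcases eq_or_lt_of_le hH with hH1 | hH1
        · have hu0 : u = 0 := by nlinarith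
          exact ⟨w, 0, 0, 0, 0, hw, le_refl _, le_refl _, le_refl _, le_refl _,
            by rw [hu0]; ring, by ring, by linarith⟩
        · have hH1' : (0:ℝ) < H - 1 := by linarith
          have e2 : (H-1)*(u/(H-1)) = u := by field_simp
          have e3 : H*u/(H-1) ≤ w := by rw [div_le_iff₀ hH1']; nlinarith
          have e6 : H*u/(H-1) = u + u/(H-1) := by field_simp; ring
          refine ⟨w - H*u/(H-1), 0, 0, u/(H-1), 0, by linarith, le_refl _, le_refl _,
            div_nonneg hu (le_of_lt hH1'), le_refl _, by linarith [e2], by ring,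
            by linarith [e6, hwu]⟩

lemma splitY (a0 a1 B0 Y : ℝ) (ha0 : 0 ≤ a0) (ha1 : 0 ≤ a1) (hB0 : 0 ≤ B0)
    (hY1 : 4*a0 ≤ Y) (hY2 : Y ≤ 5*a0 + a1 + B0) :
    ∃ lH lJ μ : ℝ, 0 ≤ lH ∧ lH ≤ a0 ∧ 0 ≤ lJ ∧ lJ ≤ a1 ∧ 0 ≤ μ ∧ μ ≤ B0 ∧
      Y = 4*a0 + lH + lJ + μ := by
  refine ⟨min (Y - 4*a0) a0, min (Y - 4*a0 - min (Y - 4*a0) a0) a1,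
    Y - 4*a0 - min (Y - 4*a0) a0 - min (Y - 4*a0 - min (Y - 4*a0) a0) a1, ?_, ?_, ?_, ?_, ?_, ?_, ?_⟩
  · exact le_min (by linarith) ha0
  · exact min_le_right _ _
  · refine le_min ?_ ha1
    rcases min_cases (Y - 4*a0) a0 with ⟨he,_⟩|⟨he,_⟩ <;> rw [he] <;> linarith
  · exact min_le_right _ _
  · rcases min_cases (Y - 4*a0 - min (Y - 4*a0) a0) a1 with ⟨he,_⟩|⟨he,he2⟩ <;> rw [he]
    · linarith
    · rcases min_cases (Y - 4*a0) a0 with ⟨he3,_⟩|⟨he3,_⟩ <;> rw [he3] at he2 ⊢ <;> linarith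
  · rcases min_cases (Y - 4*a0 - min (Y - 4*a0) a0) a1 with ⟨he,_⟩|⟨he,he2⟩ <;> rw [he]
    · rcases min_cases (Y - 4*a0) a0 with ⟨he3,_⟩|⟨he3,_⟩ <;> rw [he3] <;> linarith
    · rcases min_cases (Y - 4*a0) a0 with ⟨he3,_⟩|⟨he3,_⟩ <;> rw [he3] at he ⊢ <;> linarith
  · ring

lemma hset_sub (h d : ℕ) (hh : 1 ≤ h) (hd : 3 ≤ d) : Hset h d hd ⊆ Phd h d := by
  intro x hx
  have pf0 : 0 < d := by omega
  have pfl : d - 1 < d := by omega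
  have hD : (3:ℝ) ≤ (d:ℝ) := by exact_mod_cast hd
  have hH : (1:ℝ) ≤ (h:ℝ) := by exact_mod_cast hh
  obtain ⟨ha0, hy0, hmidc⟩ := hx
  replace ha0 : 0 ≤ x ⟨0, pf0⟩ := ha0
  replace hy0 : 0 ≤ x ⟨d-1, pfl⟩ := hy0
  replace hmidc : ∀ i : Fin d, 0 < i.val → i.val < d - 1 →
        0 ≤ x i ∧
        -((d : ℝ) - 4) * x i + (midSum x - x i) - x ⟨d-1, pfl⟩ ≤ 1 ∧
        4 * x ⟨0, pf0⟩ - 4 * x i - x ⟨d-1, pfl⟩ ≤ 0 ∧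
        -4 * x ⟨0, pf0⟩ - x i + x ⟨d-1, pfl⟩ ≤ 1 ∧
        x ⟨0, pf0⟩ - ((d : ℝ) - 3) * x i + (midSum x - x i) ≤ 1 ∧
        (5 * (h : ℝ) - 5) * x ⟨0, pf0⟩ - (((d : ℝ) - 3) * (5 * (h : ℝ) - 1) - 4) * x i
          + (5 * (h : ℝ) - 1) * (midSum x - x i) + x ⟨d-1, pfl⟩ ≤ 5 * (h : ℝ) ∧
        ((h : ℝ) - 5) * x ⟨0, pf0⟩ - ((d : ℝ) - 3) * ((h : ℝ) - 1) * x i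
          + ((h : ℝ) - 1) * (midSum x - x i) + x ⟨d-1, pfl⟩ ≤ (h : ℝ) ∧
        ((h : ℝ) - 1) * x ⟨0, pf0⟩ - (((d : ℝ) - 3) * (h : ℝ) - 1) * x i
          + (h : ℝ) * (midSum x - x i) ≤ (h : ℝ) := hmidc
  have hmidF : Finset.univ.filter (fun j : Fin d => 0 < j.val ∧ j.val < d - 1) = midF d := rfl
  -- the minimum middle coordinate
  have hne : (midF d).Nonempty := ⟨⟨1, by omega⟩, mem_midF.mpr ⟨by show 0 < 1; norm_num, by show 1 < d - 1; omega⟩⟩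
  obtain ⟨im, himT, hmin'⟩ := Finset.exists_min_image (midF d) x hne
  have him1 : 0 < im.val := (mem_midF.mp himT).1
  have him2 : im.val < d - 1 := (mem_midF.mp himT).2
  have hmin : ∀ j : Fin d, 0 < j.val → j.val < d - 1 → x im ≤ x j :=
    fun j h1 h2 => hmin' j (mem_midF.mpr ⟨h1, h2⟩)
  obtain ⟨hτ0, hc1, hc2, hc3, hc4, hc5, hc6, hc7⟩ := hmidc im him1 him2
  have hcd2 : ((d - 2 : ℕ) : ℝ) = (d:ℝ) - 2 := by
    rw [Nat.cast_sub (by omega : 2 ≤ d)]; norm_num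
  have hS0 : midSum x = ∑ j ∈ midF d, x j := midSum_eq x
  have hsum_fact : ∑ j ∈ midF d, (x j - x im) = midSum x - ((d:ℝ)-2) * x im := by
    rw [Finset.sum_sub_distrib, ← hS0, Finset.sum_const, card_midF hd, nsmul_eq_mul, hcd2]
  have hB0 : 0 ≤ midSum x - ((d:ℝ)-2) * x im := by
    rw [← hsum_fact]
    exact Finset.sum_nonneg (fun j hj => by
      have := hmin' j hj; linarith)
  obtain ⟨a1, w, p1, p2, p3, p40, p5, p6, p7, p8, p9, p10⟩ :=
    exists_a1w (h:ℝ) (x ⟨0, pf0⟩) (x im) (midSum x - ((d:ℝ)-2) * x im) (x ⟨d-1, pfl⟩)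
      hH ha0 hτ0 hB0 hy0
      (by linarith) (by linarith) (by linarith) (by linarith) (by linarith) (by linarith)
      (by linarith)
  have hr0 : 0 ≤ 1 - x ⟨0, pf0⟩ - (midSum x - ((d:ℝ)-2) * x im) := by linarith
  obtain ⟨lB, lC, lD, lE, lF, qB, qC, qD, qE, qF, q6, q7, q8⟩ :=
    symRep (h:ℝ) (x im - a1) w (1 - x ⟨0, pf0⟩ - (midSum x - ((d:ℝ)-2) * x im))
      hH (by linarith) p40 hr0 p7 p8 p9 p10
  obtain ⟨lH8, lJ, μ, s1, s2, s3, s4, s5, s6, s7⟩ :=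
    splitY (x ⟨0, pf0⟩ - a1) a1 (midSum x - ((d:ℝ)-2) * x im) (x ⟨d-1, pfl⟩ - w)
      (by linarith) p1 hB0 (by linarith) (by linarith)
  -- the beta' weights
  set bet : Fin d → ℝ := fun i => μ * (x i - x im) / (midSum x - ((d:ℝ)-2) * x im) with hbet
  have hbet_nonneg : ∀ i : Fin d, 0 < i.val → i.val < d - 1 → 0 ≤ bet i ∧ bet i ≤ x i - x im := by
    intro i h1 h2
    have hxi : x im ≤ x i := hmin i h1 h2
    rcases eq_or_lt_of_le hB0 with hB | hB
    · have hμ : μ = 0 := le_antisymm (by rw [← hB] at s6; exact s6) s5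
      rw [hbet]
      simp [hμ]
      linarith
    · constructor
      · exact div_nonneg (mul_nonneg s5 (by linarith)) hB.le
      · rw [hbet]
        rw [div_le_iff₀ hB]
        nlinarith [mul_le_mul_of_nonneg_right s6 (by linarith : (0:ℝ) ≤ x i - x im)]
  have hbet_sum : ∑ i ∈ midF d, bet i = μ := by
    rcases eq_or_lt_of_le hB0 with hB | hB
    · have hμ : μ = 0 := le_antisymm (by rw [← hB] at s6; exact s6) s5
      rw [hμ]
      apply Finset.sum_eq_zero
      intro i _
      rw [hbet]; simp [hμ]
    · have hrw : ∀ i ∈ midF d, bet i = (μ / (midSum x - ((d:ℝ)-2) * x im)) * (x i - x im) :=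
        fun i _ => by rw [hbet]; ring
      rw [Finset.sum_congr rfl hrw, ← Finset.mul_sum, hsum_fact]
      field_simp
  -- weights and points
  set W : (Fin 10 ⊕ (Fin d ⊕ Fin d)) → ℝ := Sum.elim
      (![1 - x ⟨0, pf0⟩ - (midSum x - ((d:ℝ)-2) * x im) - (lB+lC+lD+lE+lF), lB, lC, lD, lE, lF,
        (x ⟨0, pf0⟩ - a1) - lH8, lH8, a1 - lJ, lJ])
      (Sum.elim (fun i => if 0 < i.val ∧ i.val < d - 1 then (x i - x im) - bet i else 0)
        (fun i => if 0 < i.val ∧ i.val < d - 1 then bet i else 0)) with hW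
  set Z : (Fin 10 ⊕ (Fin d ⊕ Fin d)) → (Fin d → ℝ) := Sum.elim
      (![castPt (0 : Fin d → ℤ), castPt (eD d), castPt (eMid d),
        castPt ((h:ℤ) • (eMid d + eD d)), castPt (((h:ℤ)-1) • eMid d + (h:ℤ) • eD d),
        castPt ((h:ℤ) • eMid d + ((h:ℤ)-1) • eD d), castPt (eOne d + (4:ℤ) • eD d),
        castPt (eOne d + (5:ℤ) • eD d), castPt (eOne d + eMid d),
        castPt (eOne d + eMid d + eD d)])
      (Sum.elim (fun i => if 0 < i.val ∧ i.val < d - 1 then castPt (eV d i.val) else castPt 0)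
        (fun i => if 0 < i.val ∧ i.val < d - 1 then castPt (eV d i.val + eD d) else castPt 0))
      with hZ
  have hWnn : ∀ i ∈ Finset.univ, 0 ≤ W (i : Fin 10 ⊕ (Fin d ⊕ Fin d)) := by
    rintro (k | i | i) -
    · fin_cases k <;>
        (simp only [hW, Sum.elim_inl]
         try norm_num
         try linarith)
    · simp only [hW, Sum.elim_inr, Sum.elim_inl]
      split_ifs with hc
      · linarith [(hbet_nonneg i hc.1 hc.2).2]
      · exact le_refl 0
    · simp only [hW, Sum.elim_inr]
      split_ifs with hc
      · exact (hbet_nonneg i hc.1 hc.2).1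
      · exact le_refl 0
  have hWsum : ∑ i, W i = 1 := by
    rw [Fintype.sum_sum_type, Fintype.sum_sum_type]
    have h10 : ∑ k : Fin 10, W (Sum.inl k) =
        1 - (midSum x - ((d:ℝ)-2) * x im) := by
      simp only [hW, Sum.elim_inl, Fin.sum_univ_succ, Fin.sum_univ_zero,
        Matrix.cons_val_zero, Matrix.cons_val_succ]
      ring
    have hv1 : ∑ i : Fin d, W (Sum.inr (Sum.inl i)) = (midSum x - ((d:ℝ)-2) * x im) - μ := by
      simp only [hW, Sum.elim_inr, Sum.elim_inl]
      rw [← Finset.sum_filter, hmidF, Finset.sum_sub_distrib, hsum_fact, hbet_sum]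
    have hv2 : ∑ i : Fin d, W (Sum.inr (Sum.inr i)) = μ := by
      simp only [hW, Sum.elim_inr]
      rw [← Finset.sum_filter, hmidF, hbet_sum]
    rw [h10, hv1, hv2]; ring
  have hZmem : ∀ i ∈ Finset.univ, Z (i : Fin 10 ⊕ (Fin d ⊕ Fin d)) ∈ castPt '' PhdVerts h d := by
    rintro (k | i | i) -
    · fin_cases k <;>
        exact Set.mem_image_of_mem _ (Set.mem_union_left _ (by simp [Set.mem_insert_iff]))
    · simp only [hZ, Sum.elim_inr, Sum.elim_inl]
      split_ifs with hc
      · exact Set.mem_image_of_mem _ (Set.mem_union_right _ ⟨i, hc.1, hc.2, Or.inl rfl⟩)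
      · exact Set.mem_image_of_mem _ (Set.mem_union_left _ (by simp [Set.mem_insert_iff]))
    · simp only [hZ, Sum.elim_inr]
      split_ifs with hc
      · exact Set.mem_image_of_mem _ (Set.mem_union_right _ ⟨i, hc.1, hc.2, Or.inr rfl⟩)
      · exact Set.mem_image_of_mem _ (Set.mem_union_left _ (by simp [Set.mem_insert_iff]))
  have hadd : ∀ (f g : Fin d → ℤ) (jj : Fin d), castPt (f + g) jj = castPt f jj + castPt g jj := by
    intros; simp [castPt]
  have hsmul : ∀ (c : ℤ) (f : Fin d → ℤ) (jj : Fin d), castPt (c • f) jj = (c:ℝ) * castPt f jj := by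
    intros; simp [castPt]
  have zE0 : ∀ jj : Fin d, castPt (0 : Fin d → ℤ) jj = 0 := by
    intros; simp [castPt]
  have hcM : Finset.univ.centerMass W Z = x := by
    rw [Finset.centerMass_eq_of_sum_1 _ _ hWsum]
    funext j
    rw [Finset.sum_apply]
    simp only [Pi.smul_apply, smul_eq_mul]
    rw [Fintype.sum_sum_type, Fintype.sum_sum_type]
    by_cases hj0 : j.val = 0
    · have hjeq : j = ⟨0, pf0⟩ := Fin.ext hj0
      subst hjeq
      have zE1 : castPt (eOne d) (⟨0, pf0⟩ : Fin d) = 1 := by simp [castPt, eOne, eV]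
      have zEM : castPt (eMid d) (⟨0, pf0⟩ : Fin d) = 0 := by simp [castPt, eMid]
      have zED : castPt (eD d) (⟨0, pf0⟩ : Fin d) = 0 := by
        simp only [castPt, eD, eV]
        rw [if_neg (by omega)]
        norm_num
      have S1 : ∑ k : Fin 10, W (Sum.inl k) * Z (Sum.inl k) (⟨0, pf0⟩ : Fin d) =
          ((x ⟨0, pf0⟩ - a1) - lH8) + lH8 + (a1 - lJ) + lJ := by
        simp only [hW, hZ, Sum.elim_inl, Fin.sum_univ_succ, Fin.sum_univ_zero,
          Matrix.cons_val_zero, Matrix.cons_val_succ, hadd, hsmul, zE1, zEM, zED, zE0]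
        ring
      have S2 : ∑ i : Fin d, W (Sum.inr (Sum.inl i)) * Z (Sum.inr (Sum.inl i)) (⟨0, pf0⟩ : Fin d)
          = 0 := by
        apply Finset.sum_eq_zero; intro i _
        simp only [hW, hZ, Sum.elim_inr, Sum.elim_inl,
          apply_ite (fun f : Fin d → ℝ => f (⟨0, pf0⟩ : Fin d))]
        split_ifs with hc
        · have : castPt (eV d i.val) (⟨0, pf0⟩ : Fin d) = 0 := by
            simp only [castPt, eV]
            rw [if_neg (by omega)]
            norm_num
          rw [this, mul_zero]
        · rw [zero_mul]
      have S3 : ∑ i : Fin d, W (Sum.inr (Sum.inr i)) * Z (Sum.inr (Sum.inr i)) (⟨0, pf0⟩ : Fin d)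
          = 0 := by
        apply Finset.sum_eq_zero; intro i _
        simp only [hW, hZ, Sum.elim_inr,
          apply_ite (fun f : Fin d → ℝ => f (⟨0, pf0⟩ : Fin d))]
        split_ifs with hc
        · have : castPt (eV d i.val + eD d) (⟨0, pf0⟩ : Fin d) = 0 := by
            rw [hadd]
            have e1 : castPt (eV d i.val) (⟨0, pf0⟩ : Fin d) = 0 := by
              simp only [castPt, eV]
              rw [if_neg (by omega)]
              norm_num
            rw [e1, zED]; ring
          rw [this, mul_zero]
        · rw [zero_mul]
      rw [S1, S2, S3]; ring
    · by_cases hjl : j.val = d - 1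
      · have hjeq : j = ⟨d-1, pfl⟩ := Fin.ext hjl
        subst hjeq
        have zE1 : castPt (eOne d) (⟨d-1, pfl⟩ : Fin d) = 0 := by
          simp only [castPt, eOne, eV]
          rw [if_neg (by omega)]
          norm_num
        have zEM : castPt (eMid d) (⟨d-1, pfl⟩ : Fin d) = 0 := by
          simp only [castPt, eMid]
          rw [if_neg (by simp)]
          norm_num
        have zED : castPt (eD d) (⟨d-1, pfl⟩ : Fin d) = 1 := by
          simp [castPt, eD, eV]
        have S1 : ∑ k : Fin 10, W (Sum.inl k) * Z (Sum.inl k) (⟨d-1, pfl⟩ : Fin d) =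
            lB + (h:ℝ) * lD + (h:ℝ) * lE + ((h:ℝ)-1) * lF
              + 4 * ((x ⟨0, pf0⟩ - a1) - lH8) + 5 * lH8 + lJ := by
          simp only [hW, hZ, Sum.elim_inl, Fin.sum_univ_succ, Fin.sum_univ_zero,
            Matrix.cons_val_zero, Matrix.cons_val_succ, hadd, hsmul, zE1, zEM, zED, zE0]
          push_cast
          ring
        have S2 : ∑ i : Fin d, W (Sum.inr (Sum.inl i)) * Z (Sum.inr (Sum.inl i))
            (⟨d-1, pfl⟩ : Fin d) = 0 := by
          apply Finset.sum_eq_zero; intro i _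
          simp only [hW, hZ, Sum.elim_inr, Sum.elim_inl,
            apply_ite (fun f : Fin d → ℝ => f (⟨d-1, pfl⟩ : Fin d))]
          split_ifs with hc
          · have : castPt (eV d i.val) (⟨d-1, pfl⟩ : Fin d) = 0 := by
              simp only [castPt, eV]
              rw [if_neg (by omega)]
              norm_num
            rw [this, mul_zero]
          · rw [zero_mul]
        have S3 : ∑ i : Fin d, W (Sum.inr (Sum.inr i)) * Z (Sum.inr (Sum.inr i))
            (⟨d-1, pfl⟩ : Fin d) = μ := by
          have e : ∀ i : Fin d,
              (if 0 < i.val ∧ i.val < d - 1 then bet i else 0) *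
                (if 0 < i.val ∧ i.val < d - 1 then castPt (eV d i.val + eD d)
                  else castPt 0) (⟨d-1, pfl⟩ : Fin d)
              = (if 0 < i.val ∧ i.val < d - 1 then bet i else 0) := by
            intro i
            rw [apply_ite (fun f : Fin d → ℝ => f (⟨d-1, pfl⟩ : Fin d))]
            split_ifs with hc
            · have : castPt (eV d i.val + eD d) (⟨d-1, pfl⟩ : Fin d) = 1 := by
                rw [hadd]
                have e1 : castPt (eV d i.val) (⟨d-1, pfl⟩ : Fin d) = 0 := by
                  simp only [castPt, eV]
                  rw [if_neg (by omega)]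
                  norm_num
                rw [e1, zED]; ring
              rw [this, mul_one]
            · rw [zE0, mul_zero]
          simp only [hW, hZ, Sum.elim_inr]
          rw [Finset.sum_congr rfl (fun i _ => e i), ← Finset.sum_filter, hmidF, hbet_sum]
        rw [S1, S2, S3]
        linarith [q7, s7]
      · have h1 : 0 < j.val := by omega
        have h2 : j.val < d - 1 := by omega
        have zE1 : castPt (eOne d) j = 0 := by
          simp only [castPt, eOne, eV]
          rw [if_neg (by omega)]
          norm_num
        have zEM : castPt (eMid d) j = 1 := by
          simp [castPt, eMid, h1, h2]
        have zED : castPt (eD d) j = 0 := by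
          simp only [castPt, eD, eV]
          rw [if_neg (by omega)]
          norm_num
        have S1 : ∑ k : Fin 10, W (Sum.inl k) * Z (Sum.inl k) j =
            lC + (h:ℝ) * lD + ((h:ℝ)-1) * lE + (h:ℝ) * lF + (a1 - lJ) + lJ := by
          simp only [hW, hZ, Sum.elim_inl, Fin.sum_univ_succ, Fin.sum_univ_zero,
            Matrix.cons_val_zero, Matrix.cons_val_succ, hadd, hsmul, zE1, zEM, zED, zE0]
          push_cast
          ring
        have S2 : ∑ i : Fin d, W (Sum.inr (Sum.inl i)) * Z (Sum.inr (Sum.inl i)) j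
            = (x j - x im) - bet j := by
          have e : ∀ i : Fin d,
              (if 0 < i.val ∧ i.val < d - 1 then x i - x im - bet i else 0) *
                (if 0 < i.val ∧ i.val < d - 1 then castPt (eV d i.val) else castPt 0) j
              = (if i = j then x i - x im - bet i else 0) := by
            intro i
            rw [apply_ite (fun f : Fin d → ℝ => f j)]
            by_cases hij : i = j
            · subst hij
              rw [if_pos ⟨h1, h2⟩, if_pos ⟨h1, h2⟩, if_pos rfl]
              have : castPt (eV d i.val) i = 1 := by simp [castPt, eV]
              rw [this, mul_one]
            · rw [if_neg hij]
              by_cases hc : 0 < i.val ∧ i.val < d - 1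
              · rw [if_pos hc, if_pos hc]
                have : castPt (eV d i.val) j = 0 := by
                  simp only [castPt, eV]
                  rw [if_neg (by
                    intro hvv
                    exact hij (Fin.ext hvv.symm))]
                  norm_num
                rw [this, mul_zero]
              · rw [if_neg hc, zero_mul]
          simp only [hW, hZ, Sum.elim_inr, Sum.elim_inl]
          rw [Finset.sum_congr rfl (fun i _ => e i), Finset.sum_ite_eq' Finset.univ j
            (fun i => x i - x im - bet i)]
          simp
        have S3 : ∑ i : Fin d, W (Sum.inr (Sum.inr i)) * Z (Sum.inr (Sum.inr i)) j
            = bet j := by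
          have e : ∀ i : Fin d,
              (if 0 < i.val ∧ i.val < d - 1 then bet i else 0) *
                (if 0 < i.val ∧ i.val < d - 1 then castPt (eV d i.val + eD d) else castPt 0) j
              = (if i = j then bet i else 0) := by
            intro i
            rw [apply_ite (fun f : Fin d → ℝ => f j)]
            by_cases hij : i = j
            · subst hij
              rw [if_pos ⟨h1, h2⟩, if_pos ⟨h1, h2⟩, if_pos rfl]
              have : castPt (eV d i.val + eD d) i = 1 := by
                rw [hadd, zED]
                have : castPt (eV d i.val) i = 1 := by simp [castPt, eV]
                rw [this]; ring
              rw [this, mul_one]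
            · rw [if_neg hij]
              by_cases hc : 0 < i.val ∧ i.val < d - 1
              · rw [if_pos hc, if_pos hc]
                have : castPt (eV d i.val + eD d) j = 0 := by
                  rw [hadd, zED]
                  have : castPt (eV d i.val) j = 0 := by
                    simp only [castPt, eV]
                    rw [if_neg (by
                      intro hvv
                      exact hij (Fin.ext hvv.symm))]
                    norm_num
                  rw [this]; ring
                rw [this, mul_zero]
              · rw [if_neg hc, zero_mul]
          simp only [hW, hZ, Sum.elim_inr]
          rw [Finset.sum_congr rfl (fun i _ => e i), Finset.sum_ite_eq' Finset.univ j bet]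
          simp
        rw [S1, S2, S3]
        linarith [q6]
  rw [← hcM]
  exact Finset.centerMass_mem_convexHull _ hWnn (by rw [hWsum]; norm_num) hZmem

theorem stmt_9 (h d : ℕ) (hh : 1 ≤ h) (hd : 3 ≤ d) :
    Phd h d = {x : Fin d → ℝ |
      0 ≤ x ⟨0, by omega⟩ ∧ 0 ≤ x ⟨d - 1, by omega⟩ ∧
      ∀ i : Fin d, 0 < i.val → i.val < d - 1 →
        0 ≤ x i ∧
        -((d : ℝ) - 4) * x i + (midSum x - x i) - x ⟨d - 1, by omega⟩ ≤ 1 ∧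
        4 * x ⟨0, by omega⟩ - 4 * x i - x ⟨d - 1, by omega⟩ ≤ 0 ∧
        -4 * x ⟨0, by omega⟩ - x i + x ⟨d - 1, by omega⟩ ≤ 1 ∧
        x ⟨0, by omega⟩ - ((d : ℝ) - 3) * x i + (midSum x - x i) ≤ 1 ∧
        (5 * (h : ℝ) - 5) * x ⟨0, by omega⟩ - (((d : ℝ) - 3) * (5 * (h : ℝ) - 1) - 4) * x i
          + (5 * (h : ℝ) - 1) * (midSum x - x i) + x ⟨d - 1, by omega⟩ ≤ 5 * (h : ℝ) ∧
        ((h : ℝ) - 5) * x ⟨0, by omega⟩ - ((d : ℝ) - 3) * ((h : ℝ) - 1) * x i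
          + ((h : ℝ) - 1) * (midSum x - x i) + x ⟨d - 1, by omega⟩ ≤ (h : ℝ) ∧
        ((h : ℝ) - 1) * x ⟨0, by omega⟩ - (((d : ℝ) - 3) * (h : ℝ) - 1) * x i
          + (h : ℝ) * (midSum x - x i) ≤ (h : ℝ)} := by
  show Phd h d = Hset h d hd
  exact Set.Subset.antisymm (hull_sub h d hh hd) (hset_sub h d hh hd)
end
end

section
/- Every 2-dimensional integral convex polytope (lattice polygon) P ⊂ ℝ^N is normal: for every positive integer n and every lattice point α ∈ nP ∩ ℤ^N, there exist α_1, …, α_n ∈ P ∩ ℤ^N with α = α_1 + ⋯ + α_n. -/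
open Finset Pointwise

noncomputable section

/-!
By Carathéodory, a point of `P` lies in a lattice simplex of dimension at most `2` whose vertices
are vertices of `P`, so it suffices to prove that such a simplex `Δ = conv (v k)` is normal.
Write `a = ∑ A k • v k` with `A k ≥ 0` and `∑ A k = n`. If every `A k` is an integer, `a` is a sum
of `n` vertices. Otherwise `∑ fract (A k) • v k` is a lattice point whose coefficients sum to an
integer in `(0, #vertices)`: to `1`, or to `2` for a triangle, in which case we reflect it to
`∑ (1 - fract (A k)) • v k`. Either way `Δ` contains a lattice point `ρ` all of whose barycentric
coordinates are `< 1`, and `a ∈ n • Δ'` for a simplex `Δ' ⊆ Δ` obtained by replacing some vertex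
`v k` by `ρ`. This multiplies each maximal minor of the homogenized vertex matrix by the `k`-th
coordinate of `ρ`, so a nonzero integer minor strictly decreases and the descent terminates.
-/

theorem Matrix.exists_det_submatrix_ne_zero {m ι K : Type*} [Fintype m] [Fintype ι]
    [DecidableEq ι] [Field K] {M : Matrix m ι K} (hM : LinearIndependent K M.col) :
    ∃ rows : ι → m, (M.submatrix rows id).det ≠ 0 := by
  obtain ⟨κ, a, ha, hspan, hli⟩ := exists_linearIndependent' K M.row
  have : Fintype κ := Fintype.ofInjective a ha
  have hcard : Fintype.card ι = Fintype.card κ := by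
    rw [linearIndependent_iff_card_eq_finrank_span.mp hli, Set.finrank, hspan,
      ← Matrix.rank_eq_finrank_span_row, ← Matrix.rank_transpose,
      LinearIndependent.rank_matrix (by rwa [Matrix.row_transpose])]
  let e : ι ≃ κ := Fintype.equivOfCardEq hcard
  refine ⟨a ∘ e, ?_⟩
  have hrows : LinearIndependent K (M.submatrix (a ∘ e) id).row := hli.comp e e.injective
  exact ((Matrix.isUnit_iff_isUnit_det _).mp
    (Matrix.linearIndependent_rows_iff_isUnit.mp hrows)).ne_zero

lemma Fintype.sum_update_of_eq_zero {ι M : Type*} [Fintype ι] [DecidableEq ι] [AddCommMonoid M]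
    {g : ι → M} {k : ι} (hg : g k = 0) (b : M) :
    ∑ j, Function.update g k b j = b + ∑ j, g j := by
  rw [sum_update_of_mem (mem_univ k), sdiff_singleton_eq_erase, sum_erase _ hg]

lemma exists_nonneg_combination_update {𝕜 E ι : Type*} [Field 𝕜] [LinearOrder 𝕜]
    [IsStrictOrderedRing 𝕜] [AddCommGroup E] [Module 𝕜 E] [Fintype ι] [DecidableEq ι] (x : ι → E)
    {r : ι → 𝕜}
    (hr0 : ∀ k, 0 ≤ r k) (hr1 : ∑ k, r k = 1) {A : ι → 𝕜} (hA : ∀ k, 0 ≤ A k) :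
    ∃ k, 0 < r k ∧ ∃ A' : ι → 𝕜, (∀ j, 0 ≤ A' j) ∧ ∑ j, A' j = ∑ j, A j ∧
      ∑ j, A' j • Function.update x k (∑ i, r i • x i) j = ∑ j, A j • x j := by
  obtain ⟨j₀, -, hj₀⟩ := Finset.exists_lt_of_sum_lt (by simp [hr1] : ∑ _j : ι, (0 : 𝕜) < ∑ j, r j)
  obtain ⟨k, hk, hmin⟩ := Finset.exists_min_image (univ.filter fun j => 0 < r j)
    (fun j => A j / r j) ⟨j₀, by simpa using hj₀⟩
  simp only [Finset.mem_filter, mem_univ, true_and] at hk hmin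
  set t := A k / r k
  have hle : ∀ j, t * r j ≤ A j := by
    intro j
    rcases (hr0 j).eq_or_lt with h | h
    · simpa [← h] using hA j
    · exact (le_div_iff₀ h).mp (hmin j h)
  have hk0 : A k - t * r k = 0 := by simp [t, div_mul_cancel₀ _ hk.ne']
  refine ⟨k, hk, Function.update (fun j => A j - t * r j) k t, fun j => ?_, ?_, ?_⟩
  · rcases eq_or_ne j k with rfl | h
    · simpa using div_nonneg (hA j) (hr0 j)
    · simpa [h] using hle j
  · rw [Fintype.sum_update_of_eq_zero (g := fun j => A j - t * r j) hk0,
      Finset.sum_sub_distrib, ← Finset.mul_sum, hr1]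
    ring
  · have : (fun j => Function.update (fun j => A j - t * r j) k t j •
        Function.update x k (∑ i, r i • x i) j) =
        Function.update (fun j => (A j - t * r j) • x j) k (t • ∑ i, r i • x i) := by
      funext j
      rcases eq_or_ne j k with rfl | h <;> simp [*]
    rw [this, Fintype.sum_update_of_eq_zero (by rw [hk0, zero_smul])]
    simp [sub_smul, Finset.sum_sub_distrib, Finset.smul_sum, mul_smul]

lemma convexHull_range_update_subset {𝕜 E ι : Type*} [Field 𝕜] [LinearOrder 𝕜]
    [IsStrictOrderedRing 𝕜] [AddCommGroup E] [Module 𝕜 E] [DecidableEq ι] (x : ι → E) (k : ι)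
    {y : E} (hy : y ∈ convexHull 𝕜 (Set.range x)) :
    convexHull 𝕜 (Set.range (Function.update x k y)) ⊆ convexHull 𝕜 (Set.range x) := by
  refine convexHull_min (Set.range_subset_iff.mpr fun j => ?_) (convex_convexHull 𝕜 _)
  rcases eq_or_ne j k with rfl | h
  · simpa using hy
  · simpa [h] using subset_convexHull 𝕜 (Set.range x) ⟨j, rfl⟩

variable {N : ℕ}

lemma castPt_injective : Function.Injective (castPt (d := N)) := fun a b h =>
  funext fun i => by simpa [castPt] using congrFun h i

@[simp] lemma castPt_sub (a b : Fin N → ℤ) : castPt (a - b) = castPt a - castPt b := by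
  funext i; simp [castPt]

@[simp] lemma castPt_zsmul (m : ℤ) (a : Fin N → ℤ) : castPt (m • a) = (m : ℝ) • castPt a := by
  funext i; simp [castPt]

@[simp] lemma castPt_nsmul (m : ℕ) (a : Fin N → ℤ) : castPt (m • a) = (m : ℝ) • castPt a := by
  funext i; simp [castPt]

@[simp] lemma castPt_sum {ι : Type*} (s : Finset ι) (f : ι → Fin N → ℤ) :
    castPt (∑ i ∈ s, f i) = ∑ i ∈ s, castPt (f i) := by
  funext i; simp [castPt, Finset.sum_apply]

def IsLatticeSum (S : Set (Fin N → ℝ)) (n : ℕ) (a : Fin N → ℤ) : Prop :=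
  ∃ s : Multiset (Fin N → ℤ), Multiset.card s = n ∧ (∀ x ∈ s, castPt x ∈ S) ∧ s.sum = a

lemma IsLatticeSum.mono {S T : Set (Fin N → ℝ)} (hST : S ⊆ T) {n : ℕ} {a : Fin N → ℤ}
    (h : IsLatticeSum S n a) : IsLatticeSum T n a := by
  obtain ⟨s, hcard, hmem, hsum⟩ := h
  exact ⟨s, hcard, fun x hx => hST (hmem x hx), hsum⟩

lemma IsLatticeSum.exists_fin_sum_eq {S : Set (Fin N → ℝ)} {n : ℕ} {a : Fin N → ℤ}
    (h : IsLatticeSum S n a) :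
    ∃ f : Fin n → (Fin N → ℤ), (∀ i, castPt (f i) ∈ S) ∧ a = ∑ i, f i := by
  obtain ⟨s, hcard, hmem, rfl⟩ := h
  obtain ⟨l, rfl⟩ := Quot.exists_rep s
  have hlen : l.length = n := hcard
  subst hlen
  exact ⟨fun i => l[i], fun i => hmem _ (List.getElem_mem _), (Fin.sum_univ_getElem l).symm⟩

lemma isLatticeSum_of_natCast_coeffs {ι : Type*} [Fintype ι] (v : ι → Fin N → ℤ) (m : ι → ℕ)
    {n : ℕ} (hm : ∑ k, m k = n) {a : Fin N → ℤ}
    (ha : castPt a = ∑ k, (m k : ℝ) • castPt (v k)) :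
    IsLatticeSum (convexHull ℝ (Set.range (castPt ∘ v))) n a := by
  refine ⟨∑ k, Multiset.replicate (m k) (v k), by simp [Multiset.card_sum, hm], ?_, ?_⟩
  · intro x hx
    obtain ⟨k, -, hk⟩ := Multiset.mem_sum.mp hx
    rw [Multiset.eq_of_mem_replicate hk]
    exact subset_convexHull ℝ _ ⟨k, rfl⟩
  · apply castPt_injective
    simp only [Multiset.sum_sum, Multiset.sum_replicate, castPt_sum, castPt_nsmul, ha]

lemma exists_latticePoint_of_fract_ne_zero {ι : Type*} [Fintype ι]
    (hcard : Fintype.card ι ≤ 3) (v : ι → Fin N → ℤ) {n : ℕ} {a : Fin N → ℤ} {A : ι → ℝ}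
    (hA : ∑ k, A k = n) (ha : castPt a = ∑ k, A k • castPt (v k))
    (hfrac : ∃ k, Int.fract (A k) ≠ 0) :
    ∃ (ρ : Fin N → ℤ) (r : ι → ℝ), (∀ k, 0 ≤ r k) ∧ (∀ k, r k < 1) ∧ ∑ k, r k = 1 ∧
      castPt ρ = ∑ k, r k • castPt (v k) := by
  classical
  obtain ⟨k₀, hk₀⟩ := hfrac
  set φ : ι → ℝ := fun k => Int.fract (A k)
  set ρ₀ : Fin N → ℤ := a - ∑ k, ⌊A k⌋ • v k
  have hρ₀ : castPt ρ₀ = ∑ k, φ k • castPt (v k) := by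
    simp only [ρ₀, φ, castPt_sub, castPt_sum, castPt_zsmul, ha, ← Finset.sum_sub_distrib,
      ← sub_smul, Int.self_sub_floor]
  set s : ℤ := n - ∑ k, ⌊A k⌋
  have hs : ∑ k, φ k = s := by
    simp only [φ, s, ← Int.self_sub_floor, Finset.sum_sub_distrib, hA]
    push_cast
    rfl
  have hs_pos : 0 < s := by
    have : (0 : ℝ) < ∑ k, φ k := Finset.sum_pos' (fun k _ => Int.fract_nonneg _)
      ⟨k₀, mem_univ _, (Int.fract_nonneg _).lt_of_ne' hk₀⟩
    exact_mod_cast hs ▸ this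
  have hs_lt : s < Fintype.card ι := by
    have : ∑ k, φ k < ∑ _k : ι, (1 : ℝ) :=
      Finset.sum_lt_sum_of_nonempty ⟨k₀, mem_univ _⟩ fun k _ => Int.fract_lt_one _
    simp only [sum_const, card_univ, nsmul_eq_mul, mul_one, hs] at this
    exact_mod_cast this
  rcases (by omega : s = 1 ∨ (s = 2 ∧ Fintype.card ι = 3)) with h1 | ⟨h2, h3⟩
  · exact ⟨ρ₀, φ, fun k => Int.fract_nonneg _, fun k => Int.fract_lt_one _, by simp [hs, h1], hρ₀⟩
  · refine ⟨∑ k, v k - ρ₀, fun k => 1 - φ k, fun k => sub_nonneg.2 (Int.fract_lt_one _).le,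
      fun k => ?_, ?_, ?_⟩
    · have hrest : ∑ j ∈ univ.erase k, φ j < ∑ _j ∈ univ.erase k, (1 : ℝ) :=
        Finset.sum_lt_sum_of_nonempty (Finset.card_pos.mp (by simp [h3]))
          fun j _ => Int.fract_lt_one _
      simp only [sum_const, card_erase_of_mem (mem_univ k), card_univ, h3, nsmul_eq_mul,
        mul_one] at hrest
      norm_num [hs, h2] at hrest
      show 1 - φ k < 1
      linarith
    · simp [Finset.sum_sub_distrib, hs, h2, h3]
      norm_num
    · simp [hρ₀, sub_smul, Finset.sum_sub_distrib]

section LatticeMinor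

variable {ι : Type*}

-- Column `j` is `v j` in homogeneous coordinates: the extra row `none` is constantly `1`.
def homogMatrix (v : ι → Fin N → ℤ) : Matrix (Option (Fin N)) ι ℤ :=
  Matrix.of fun o j => o.elim 1 (v j)

variable [Fintype ι]

lemma linearIndependent_homogMatrix_col {v : ι → Fin N → ℤ}
    (hv : AffineIndependent ℝ (castPt ∘ v)) :
    LinearIndependent ℝ ((homogMatrix v).map (Int.cast : ℤ → ℝ)).col := by
  rw [Fintype.linearIndependent_iff]
  intro g hg
  have hsum : ∑ j, g j = 0 := by simpa [homogMatrix, Matrix.col] using congrFun hg none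
  have hcomb : ∑ j, g j • castPt (v j) = 0 := by
    funext c; simpa [homogMatrix, Matrix.col, castPt, Finset.sum_apply] using congrFun hg (some c)
  exact fun j => affineIndependent_iff.mp hv univ g hsum hcomb j (mem_univ j)

variable [DecidableEq ι]

def latticeMinor (rows : ι → Option (Fin N)) (v : ι → Fin N → ℤ) : ℤ :=
  ((homogMatrix v).submatrix rows id).det

lemma latticeMinor_cast (rows : ι → Option (Fin N)) (v : ι → Fin N → ℤ) :
    (latticeMinor rows v : ℝ) =
      (((homogMatrix v).map (Int.cast : ℤ → ℝ)).submatrix rows id).det := by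
  rw [latticeMinor, Int.cast_det, Matrix.submatrix_map]

lemma exists_latticeMinor_ne_zero {v : ι → Fin N → ℤ} (hv : AffineIndependent ℝ (castPt ∘ v)) :
    ∃ rows, latticeMinor rows v ≠ 0 := by
  obtain ⟨rows, hrows⟩ := Matrix.exists_det_submatrix_ne_zero (linearIndependent_homogMatrix_col hv)
  exact ⟨rows, fun h => hrows (by rw [← latticeMinor_cast, h, Int.cast_zero])⟩

lemma latticeMinor_update (rows : ι → Option (Fin N)) (v : ι → Fin N → ℤ) {ρ : Fin N → ℤ}
    {r : ι → ℝ} (hr : ∑ j, r j = 1) (hρ : castPt ρ = ∑ j, r j • castPt (v j)) (k : ι) :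
    (latticeMinor rows (Function.update v k ρ) : ℝ) = r k * latticeMinor rows v := by
  rw [latticeMinor_cast, latticeMinor_cast, ← smul_eq_mul, ← Matrix.det_updateCol_sum]
  congr 1
  ext i j
  rcases eq_or_ne j k with rfl | hj
  · rcases h : rows i with _ | c
    · simp [homogMatrix, h, hr]
    · simpa [homogMatrix, h, castPt, Finset.sum_apply] using congrFun hρ c
  · simp [homogMatrix, hj]

end LatticeMinor

theorem exists_smaller_latticeMinor {ι : Type*} [Fintype ι] [DecidableEq ι]
    (hcard : Fintype.card ι ≤ 3) (rows : ι → Option (Fin N)) {v : ι → Fin N → ℤ}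
    (hv : latticeMinor rows v ≠ 0) {n : ℕ} {a : Fin N → ℤ} {A : ι → ℝ} (hA0 : ∀ k, 0 ≤ A k)
    (hA : ∑ k, A k = n) (ha : castPt a = ∑ k, A k • castPt (v k))
    (hfrac : ∃ k, Int.fract (A k) ≠ 0) :
    ∃ (v' : ι → Fin N → ℤ) (A' : ι → ℝ), latticeMinor rows v' ≠ 0 ∧
      (latticeMinor rows v').natAbs < (latticeMinor rows v).natAbs ∧
      convexHull ℝ (Set.range (castPt ∘ v')) ⊆ convexHull ℝ (Set.range (castPt ∘ v)) ∧
      (∀ k, 0 ≤ A' k) ∧ ∑ k, A' k = n ∧ castPt a = ∑ k, A' k • castPt (v' k) := by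
  obtain ⟨ρ, r, hr0, hr1, hrsum, hρ⟩ := exists_latticePoint_of_fract_ne_zero hcard v hA ha hfrac
  obtain ⟨k, hk, A', hA'0, hA'sum, hA'⟩ :=
    exists_nonneg_combination_update (castPt ∘ v) hr0 hrsum hA0
  have hminor := latticeMinor_update rows v hrsum hρ k
  have habs : |(latticeMinor rows (Function.update v k ρ) : ℝ)| < |(latticeMinor rows v : ℝ)| := by
    rw [hminor, abs_mul, abs_of_pos hk]
    exact mul_lt_of_lt_one_left (abs_pos.mpr (Int.cast_ne_zero.mpr hv)) (hr1 k)
  rw [← Int.cast_abs, ← Int.cast_abs, Int.cast_lt, Int.abs_eq_natAbs, Int.abs_eq_natAbs] at habs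
  have hρmem : castPt ρ ∈ convexHull ℝ (Set.range (castPt ∘ v)) := hρ ▸
    (convex_convexHull ℝ _).sum_mem (fun i _ => hr0 i) hrsum
      fun i _ => subset_convexHull ℝ _ ⟨i, rfl⟩
  refine ⟨Function.update v k ρ, A', ?_, Int.ofNat_lt.mp habs, ?_, hA'0, hA'sum.trans hA, ?_⟩
  · exact_mod_cast hminor ▸ mul_ne_zero hk.ne' (Int.cast_ne_zero.mpr hv)
  · rw [Function.comp_update]
    exact convexHull_range_update_subset _ k hρmem
  · refine ha.trans (hA'.symm.trans ?_)
    simp only [Function.comp_apply, ← hρ, ← Function.comp_update]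

theorem isLatticeSum_of_latticeMinor_ne_zero {ι : Type*} [Fintype ι] [DecidableEq ι]
    (hcard : Fintype.card ι ≤ 3) (rows : ι → Option (Fin N)) {v : ι → Fin N → ℤ}
    (hv : latticeMinor rows v ≠ 0) {n : ℕ} {a : Fin N → ℤ} {A : ι → ℝ} (hA0 : ∀ k, 0 ≤ A k)
    (hA : ∑ k, A k = n) (ha : castPt a = ∑ k, A k • castPt (v k)) :
    IsLatticeSum (convexHull ℝ (Set.range (castPt ∘ v))) n a := by
  induction hm : (latticeMinor rows v).natAbs using Nat.strong_induction_on generalizing v A with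
  | _ m ih =>
  by_cases hint : ∀ k, Int.fract (A k) = 0
  · have hAk : ∀ k, (⌊A k⌋₊ : ℝ) = A k := fun k => by
      rw [natCast_floor_eq_intCast_floor (hA0 k)]
      linarith [Int.fract_add_floor (A k), hint k]
    refine isLatticeSum_of_natCast_coeffs v (fun k => ⌊A k⌋₊) ?_ (by simpa only [hAk] using ha)
    exact_mod_cast (by simpa only [Nat.cast_sum, hAk] using hA : ((∑ k, ⌊A k⌋₊ : ℕ) : ℝ) = n)
  push Not at hint
  obtain ⟨v', A', hv', hlt, hsub, hA'0, hA', ha'⟩ :=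
    exists_smaller_latticeMinor hcard rows hv hA0 hA ha hint
  exact (ih _ (hm ▸ hlt) hv' hA'0 hA' ha' rfl).mono hsub

theorem isLatticeSum_of_affineIndependent {ι : Type*} [Fintype ι] (hcard : Fintype.card ι ≤ 3)
    {v : ι → Fin N → ℤ} (hv : AffineIndependent ℝ (castPt ∘ v)) {n : ℕ} {a : Fin N → ℤ}
    {A : ι → ℝ} (hA0 : ∀ k, 0 ≤ A k) (hA : ∑ k, A k = n)
    (ha : castPt a = ∑ k, A k • castPt (v k)) :
    IsLatticeSum (convexHull ℝ (Set.range (castPt ∘ v))) n a := by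
  classical
  obtain ⟨rows, hrows⟩ := exists_latticeMinor_ne_zero hv
  exact isLatticeSum_of_latticeMinor_ne_zero hcard rows hrows hA0 hA ha

theorem stmt_11 (N : ℕ) (V : Finset (Fin N → ℤ)) (P : Set (Fin N → ℝ))
    (hP : P = convexHull ℝ (castPt '' (V : Set (Fin N → ℤ))))
    (hdim : Module.finrank ℝ (vectorSpan ℝ P) = 2) :
    ∀ n : ℕ, 0 < n → ∀ a : Fin N → ℤ, castPt a ∈ (n : ℝ) • P →
      ∃ f : Fin n → (Fin N → ℤ), (∀ i, castPt (f i) ∈ P) ∧ a = ∑ i, f i := by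
  intro n _ a ha
  obtain ⟨x, hxP, hxa⟩ := Set.mem_smul_set.mp ha
  obtain ⟨ι, _, z, w, hzV, hz, hw0, hw1, rfl⟩ := eq_pos_convex_span_of_mem_convexHull (hP ▸ hxP)
  choose v _ hv using fun i => hzV ⟨i, rfl⟩
  obtain rfl : castPt ∘ v = z := funext hv
  have hVP : castPt '' (V : Set (Fin N → ℤ)) ⊆ P := hP ▸ subset_convexHull ℝ _
  have hcard : Fintype.card ι ≤ 3 := by
    have := Submodule.finrank_mono (vectorSpan_mono ℝ (hzV.trans hVP))
    have := hz.card_le_finrank_succ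
    omega
  have hsub : convexHull ℝ (Set.range (castPt ∘ v)) ⊆ P := hP ▸ convexHull_mono hzV
  refine ((isLatticeSum_of_affineIndependent hcard hz (A := fun i => n * w i)
    (fun i => mul_nonneg n.cast_nonneg (hw0 i).le) ?_ ?_).mono hsub).exists_fin_sum_eq
  · rw [← Finset.mul_sum, hw1, mul_one]
  · simp only [← hxa, Finset.smul_sum, mul_smul]
    rfl
end
end
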